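/- arXiv:2509.08799 — 7 statements merged into one kernel-verified Lean document; each statement's English description precedes it below -/
import Mathlib

section
/- The dual functional K of semi-discrete partial optimal transport is concave on (0,∞)^N and continuously differentiable there, with gradient ∇K(ψ) = α − G(ψ); that is, ∂K/∂ψ_i(ψ) = α_i − ρ(RLag_i(ψ)) for every i ∈ {1,…,N} and every ψ ∈ (0,∞)^N. -/
open MeasureTheory Real Filter Set

noncomputable section

/-- The (unrestricted) Laguerre cell of index `i` in `ℝ^d`. -/
def LagD {d N : ℕ} (y : Fin N → EuclideanSpace ℝ (Fin d)) (ψ : Fin N → ℝ) (i : Fin N) :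
    Set (EuclideanSpace ℝ (Fin d)) :=
  {x | ∀ j, ‖x - y i‖ ^ 2 - ψ i ≤ ‖x - y j‖ ^ 2 - ψ j}

/-- The restricted Laguerre cell of index `i`. -/
def RLagD {d N : ℕ} (y : Fin N → EuclideanSpace ℝ (Fin d)) (ψ : Fin N → ℝ) (i : Fin N) :
    Set (EuclideanSpace ℝ (Fin d)) :=
  LagD y ψ i ∩ {x | ‖x - y i‖ ^ 2 ≤ ψ i}

/-- The dual functional of semi-discrete partial optimal transport. -/
def KD {d N : ℕ} (ρ : Measure (EuclideanSpace ℝ (Fin d)))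
    (y : Fin N → EuclideanSpace ℝ (Fin d)) (α : Fin N → ℝ) (ψ : Fin N → ℝ) : ℝ :=
  (∫ x, min 0 (⨅ i, (‖x - y i‖ ^ 2 - ψ i)) ∂ρ) + ∑ i, α i * ψ i


/-!
Write `c(x) = (‖x - y_j‖²)_j`. Then `K(ψ) = ∫ m(c(x) - ψ) dρ(x) + ⟪α, ψ⟫` with
`m(v) = min(0, min_i v_i)`, a concave 1-Lipschitz function of `v`; this gives concavity.
Since spheres and hyperplanes are Lebesgue-null and `ρ ≪ volume`, for `ρ`-a.e. `x` the entries of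
`v = c(x) - ψ` are nonzero and pairwise distinct. At such `v`, membership in each cell
`{v | v_i ≤ 0, v_i ≤ v_j ∀ j}` is locally constant, so `m` is locally either `v_i` (for the unique
cell containing `v`, i.e. `x ∈ RLag_i(ψ)`) or `0`. Differentiating under the integral sign then gives
`∇K(ψ) = α - G(ψ)`, and dominated convergence of the cell indicators gives continuity of `G`.
-/

open Topology

section PartialMin

variable {ι : Type*}

def partialMin (v : ι → ℝ) : ℝ := min 0 (⨅ i, v i)

def minCell (i : ι) : Set (ι → ℝ) := {v | v i ≤ 0 ∧ ∀ j, v i ≤ v j}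

theorem partialMin_le_zero (v : ι → ℝ) : partialMin v ≤ 0 := min_le_left _ _

theorem partialMin_le [Finite ι] (v : ι → ℝ) (i : ι) : partialMin v ≤ v i :=
  (min_le_right _ _).trans (ciInf_le (Finite.bddBelow_range _) i)

theorem le_partialMin [Nonempty ι] {v : ι → ℝ} {a : ℝ} (h0 : a ≤ 0) (h : ∀ i, a ≤ v i) :
    a ≤ partialMin v :=
  le_min h0 (le_ciInf h)

theorem partialMin_eq_zero_of_nonneg [Nonempty ι] {v : ι → ℝ} (h : 0 ≤ v) : partialMin v = 0 :=
  le_antisymm (partialMin_le_zero v) (le_partialMin le_rfl h)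

theorem partialMin_eq_of_mem_minCell [Finite ι] [Nonempty ι] {v : ι → ℝ} {i : ι}
    (h : v ∈ minCell i) : partialMin v = v i :=
  le_antisymm (partialMin_le v i) (le_partialMin h.1 h.2)

theorem partialMin_eq_zero_of_forall_notMem [Finite ι] [Nonempty ι] {v : ι → ℝ}
    (h : ∀ i, v ∉ minCell i) : partialMin v = 0 := by
  obtain ⟨i, hi⟩ := Finite.exists_min v
  have hpos : 0 < v i := by
    by_contra! hle
    exact h i ⟨hle, hi⟩
  exact partialMin_eq_zero_of_nonneg fun j => hpos.le.trans (hi j)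

theorem isClosed_minCell (i : ι) : IsClosed (minCell i) := by
  simp only [minCell, ofPred_and, ofPred_forall]
  exact (isClosed_le (continuous_apply i) continuous_const).inter
    (isClosed_iInter fun j => isClosed_le (continuous_apply i) (continuous_apply j))

theorem eventually_mem_minCell_iff [Finite ι] {v : ι → ℝ} (hv : Function.Injective v)
    (hv0 : ∀ i, v i ≠ 0) (i : ι) : ∀ᶠ u in 𝓝 v, u ∈ minCell i ↔ v ∈ minCell i := by
  have hcont : ∀ j, ContinuousAt (fun u : ι → ℝ => u j) v := fun j =>
    (continuous_apply j).continuousAt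
  by_cases hi : v ∈ minCell i
  · have hneg : ∀ᶠ u in 𝓝 v, u i < 0 :=
      (hcont i).eventually_lt continuousAt_const (hi.1.lt_of_ne (hv0 i))
    have hlt : ∀ j, ∀ᶠ u in 𝓝 v, j ≠ i → u i < u j := fun j => by
      by_cases hj : j = i
      · exact Eventually.of_forall fun _ h => absurd hj h
      · filter_upwards [(hcont i).eventually_lt (hcont j)
          ((hi.2 j).lt_of_ne (hv.ne (Ne.symm hj)))] with u hu _ using hu
    filter_upwards [hneg, eventually_all.2 hlt] with u hu hlt
    refine iff_of_true ⟨hu.le, fun j => ?_⟩ hi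
    by_cases hj : j = i
    · rw [hj]
    · exact (hlt j hj).le
  · filter_upwards [(isClosed_minCell i).isOpen_compl.mem_nhds hi] with u hu
      using iff_of_false hu hi

variable [Fintype ι]

def partialMinGrad (v : ι → ℝ) : (ι → ℝ) →L[ℝ] ℝ :=
  ∑ i, (minCell i).indicator (1 : (ι → ℝ) → ℝ) v • ContinuousLinearMap.proj i

variable [Nonempty ι]

theorem concaveOn_partialMin : ConcaveOn ℝ univ (partialMin : (ι → ℝ) → ℝ) := by
  refine ⟨convex_univ, fun v _ w _ a b ha hb _ => ?_⟩
  simp only [smul_eq_mul]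
  refine le_partialMin ?_ fun i => ?_
  · nlinarith [partialMin_le_zero v, partialMin_le_zero w]
  · simp only [Pi.add_apply, Pi.smul_apply, smul_eq_mul]
    nlinarith [partialMin_le v i, partialMin_le w i]

theorem lipschitzWith_partialMin : LipschitzWith 1 (partialMin : (ι → ℝ) → ℝ) := by
  refine LipschitzWith.of_le_add fun v w => ?_
  have hvw : ∀ i, v i ≤ w i + dist v w := fun i => by
    have := dist_le_pi_dist v w i
    rw [Real.dist_eq] at this
    linarith [le_abs_self (v i - w i)]
  suffices partialMin v - dist v w ≤ partialMin w by linarith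
  exact le_partialMin (by linarith [partialMin_le_zero v, dist_nonneg (x := v) (y := w)])
    fun i => by linarith [partialMin_le v i, hvw i]

theorem hasFDerivAt_partialMin {v : ι → ℝ} (hv : Function.Injective v) (hv0 : ∀ i, v i ≠ 0) :
    HasFDerivAt partialMin (partialMinGrad v) v := by
  have hloc : ∀ᶠ u in 𝓝 v, ∀ i, u ∈ minCell i ↔ v ∈ minCell i :=
    eventually_all.2 (eventually_mem_minCell_iff hv hv0)
  by_cases hcell : ∃ i, v ∈ minCell i
  · obtain ⟨i, hi⟩ := hcell
    -- a second cell containing `v` would force a tie `v i = v j`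
    have hunique : ∀ j, v ∈ minCell j → j = i := fun j hj =>
      hv (le_antisymm (hj.2 i) (hi.2 j))
    rw [partialMinGrad, Finset.sum_eq_single_of_mem i (Finset.mem_univ i)
      fun j _ hji => by rw [indicator_of_notMem (fun hj => hji (hunique j hj)), zero_smul],
      indicator_of_mem hi, Pi.one_apply, one_smul]
    refine (hasFDerivAt_apply i v).congr_of_eventuallyEq ?_
    filter_upwards [hloc] with u hu using partialMin_eq_of_mem_minCell ((hu i).2 hi)
  · simp only [not_exists] at hcell
    simp only [partialMinGrad, indicator_of_notMem (hcell _), zero_smul, Finset.sum_const_zero]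
    refine (hasFDerivAt_const 0 v).congr_of_eventuallyEq ?_
    filter_upwards [hloc] with u hu
    exact partialMin_eq_zero_of_forall_notMem fun i hi => hcell i ((hu i).1 hi)

theorem hasFDerivAt_partialMin_const_sub (w : ι → ℝ) {ψ : ι → ℝ}
    (hv : Function.Injective (w - ψ)) (hv0 : ∀ i, (w - ψ) i ≠ 0) :
    HasFDerivAt (fun φ => partialMin (w - φ)) (-partialMinGrad (w - ψ)) ψ := by
  have := (hasFDerivAt_partialMin hv hv0).comp ψ ((hasFDerivAt_id ψ).const_sub w)
  rwa [ContinuousLinearMap.comp_neg, ContinuousLinearMap.comp_id] at this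

end PartialMin

theorem concaveOn_integral {E X : Type*} [AddCommGroup E] [Module ℝ E] [MeasurableSpace X]
    {ρ : Measure X} {s : Set E} {F : E → X → ℝ} (hs : Convex ℝ s)
    (hF : ∀ x, ConcaveOn ℝ s (F · x)) (hint : ∀ ψ ∈ s, Integrable (F ψ) ρ) :
    ConcaveOn ℝ s fun ψ => ∫ x, F ψ x ∂ρ := by
  refine ⟨hs, fun ψ hψ φ hφ a b ha hb hab => ?_⟩
  simp only [smul_eq_mul]
  rw [← integral_const_mul, ← integral_const_mul,
    ← integral_add ((hint ψ hψ).const_mul a) ((hint φ hφ).const_mul b)]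
  exact integral_mono (((hint ψ hψ).const_mul a).add ((hint φ hφ).const_mul b))
    (hint _ (hs hψ hφ ha hb hab)) fun x => (hF x).2 hψ hφ ha hb hab

section PartialDual

variable {ι X : Type*} [Fintype ι] [MeasurableSpace X] {ρ : Measure X} [IsFiniteMeasure ρ]
  {c : X → ι → ℝ}

theorem measurableSet_preimage_minCell (hc : Measurable c) (ψ : ι → ℝ) (i : ι) :
    MeasurableSet ((fun x => c x - ψ) ⁻¹' minCell i) :=
  (isClosed_minCell i).measurableSet.preimage (hc.sub_const ψ)

theorem integrable_indicator_minCell_sub_smul (hc : Measurable c) (ψ : ι → ℝ) (i : ι)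
    {F : Type*} [NormedAddCommGroup F] [NormedSpace ℝ F] (L : F) :
    Integrable (fun x => (minCell i).indicator (1 : (ι → ℝ) → ℝ) (c x - ψ) • L) ρ := by
  refine Integrable.smul_const ?_ L
  exact (integrable_const 1).indicator (measurableSet_preimage_minCell hc ψ i)

theorem integrable_partialMinGrad_sub (hc : Measurable c) (ψ : ι → ℝ) :
    Integrable (fun x => partialMinGrad (c x - ψ)) ρ := by
  simp only [partialMinGrad]
  exact integrable_finsetSum (f := fun i x => (minCell i).indicator (1 : (ι → ℝ) → ℝ) (c x - ψ) •
    (ContinuousLinearMap.proj i : (ι → ℝ) →L[ℝ] ℝ)) _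
    fun i _ => integrable_indicator_minCell_sub_smul hc ψ i _

theorem integral_partialMinGrad_sub (hc : Measurable c) (ψ : ι → ℝ) :
    ∫ x, partialMinGrad (c x - ψ) ∂ρ =
      ∑ i, ρ.real ((fun x => c x - ψ) ⁻¹' minCell i) • ContinuousLinearMap.proj (R := ℝ) i := by
  simp only [partialMinGrad]
  rw [integral_finsetSum _ fun i _ => integrable_indicator_minCell_sub_smul hc ψ i _]
  refine Finset.sum_congr rfl fun i _ => ?_
  rw [integral_smul_const, ← integral_indicator_one (measurableSet_preimage_minCell hc ψ i)]
  rfl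

theorem continuousAt_measureReal_preimage_minCell (hc : Measurable c) {ψ : ι → ℝ}
    (hgen : ∀ᵐ x ∂ρ, Function.Injective (c x - ψ) ∧ ∀ i, (c x - ψ) i ≠ 0) (i : ι) :
    ContinuousAt (fun φ => ρ.real ((fun x => c x - φ) ⁻¹' minCell i)) ψ := by
  refine (ENNReal.tendsto_toReal (measure_ne_top _ _)).comp
    (tendsto_measure_of_ae_tendsto_indicator_of_isFiniteMeasure _
      (measurableSet_preimage_minCell hc ψ i) (fun φ => measurableSet_preimage_minCell hc φ i) ?_)
  filter_upwards [hgen] with x hx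
  exact ((continuous_const.sub continuous_id).tendsto ψ).eventually
    (eventually_mem_minCell_iff hx.1 hx.2 i)

variable [Nonempty ι]

theorem integrable_partialMin_sub (hc : Measurable c) (hc0 : ∀ x, 0 ≤ c x) (ψ : ι → ℝ) :
    Integrable (fun x => partialMin (c x - ψ)) ρ := by
  refine Integrable.mono' (integrable_const ‖ψ‖)
    (lipschitzWith_partialMin.continuous.measurable.comp (hc.sub_const ψ)).aestronglyMeasurable
    (ae_of_all _ fun x => ?_)
  have hψ : ∀ i, ψ i ≤ ‖ψ‖ := fun i => (le_abs_self _).trans (norm_le_pi_norm ψ i)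
  rw [Real.norm_eq_abs, abs_of_nonpos (partialMin_le_zero _), neg_le]
  exact le_partialMin (neg_nonpos.2 (norm_nonneg _)) fun i => by
    simp only [Pi.sub_apply]
    linarith [show (0 : ℝ) ≤ c x i from hc0 x i, hψ i]

theorem concaveOn_integral_partialMin_sub (hc : Measurable c) (hc0 : ∀ x, 0 ≤ c x) :
    ConcaveOn ℝ univ fun ψ => ∫ x, partialMin (c x - ψ) ∂ρ := by
  refine concaveOn_integral convex_univ (fun x => ?_)
    fun ψ _ => integrable_partialMin_sub hc hc0 ψ
  exact concaveOn_partialMin.comp_affineMap (AffineEquiv.constVSub ℝ (c x)).toAffineMap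

theorem hasFDerivAt_integral_partialMin_sub (hc : Measurable c) (hc0 : ∀ x, 0 ≤ c x)
    {ψ : ι → ℝ} (hgen : ∀ᵐ x ∂ρ, Function.Injective (c x - ψ) ∧ ∀ i, (c x - ψ) i ≠ 0) :
    HasFDerivAt (fun φ => ∫ x, partialMin (c x - φ) ∂ρ)
      (-∑ i, ρ.real ((fun x => c x - ψ) ⁻¹' minCell i) • ContinuousLinearMap.proj (R := ℝ) i)
      ψ := by
  have hlip : ∀ x, LipschitzWith 1 fun φ => partialMin (c x - φ) := fun x => by
    simpa [Function.comp_def] using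
      lipschitzWith_partialMin.comp ((LipschitzWith.const (c x)).sub LipschitzWith.id)
  have hderiv := hasFDerivAt_integral_of_dominated_loc_of_lip
    (F := fun φ x => partialMin (c x - φ)) (F' := fun x => -partialMinGrad (c x - ψ))
    (bound := fun _ => 1) Filter.univ_mem
    (Eventually.of_forall fun φ => (integrable_partialMin_sub hc hc0 φ).1)
    (integrable_partialMin_sub hc hc0 ψ) (integrable_partialMinGrad_sub hc ψ).neg.1
    (ae_of_all _ fun x => by rw [map_one]; exact (hlip x).lipschitzOnWith)
    (integrable_const 1)
    (hgen.mono fun x hx => hasFDerivAt_partialMin_const_sub (c x) hx.1 hx.2)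
  rw [integral_neg, integral_partialMinGrad_sub hc] at hderiv
  exact hderiv.2

end PartialDual

theorem addHaar_preimage_singleton_eq_zero {E : Type*} [NormedAddCommGroup E] [NormedSpace ℝ E]
    [FiniteDimensional ℝ E] [MeasurableSpace E] [BorelSpace E] (μ : Measure E)
    [μ.IsAddHaarMeasure] {ℓ : E →L[ℝ] ℝ} (hℓ : ℓ ≠ 0) (a : ℝ) : μ (ℓ ⁻¹' {a}) = 0 := by
  obtain ⟨z, hz⟩ : ∃ z, ℓ z ≠ 0 := by
    by_contra! h
    exact hℓ (ContinuousLinearMap.ext h)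
  have hx₀ : ℓ ((a / ℓ z) • z) = a := by simp [hz]
  have htrans : ℓ ⁻¹' {a} =
      (· + -((a / ℓ z) • z)) ⁻¹' (LinearMap.ker (ℓ : E →ₗ[ℝ] ℝ) : Set E) := by
    ext x
    simp [hx₀, ← sub_eq_add_neg, sub_eq_zero]
  rw [htrans, measure_preimage_add_right]
  refine Measure.addHaar_submodule μ _ fun htop => hz ?_
  exact LinearMap.mem_ker.1 (htop ▸ Submodule.mem_top)

section Genericity

variable {E : Type*} [NormedAddCommGroup E] [InnerProductSpace ℝ E] [FiniteDimensional ℝ E]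
  [MeasurableSpace E] [BorelSpace E] (μ : Measure E) [μ.IsAddHaarMeasure]

theorem ae_norm_sub_sq_ne [Nontrivial E] (v : E) (r : ℝ) : ∀ᵐ x ∂μ, ‖x - v‖ ^ 2 ≠ r := by
  refine measure_mono_null (fun x hx => ?_) (Measure.addHaar_sphere μ v √r)
  have hx : ‖x - v‖ ^ 2 = r := by simpa using hx
  rw [Metric.mem_sphere, dist_eq_norm, ← hx, Real.sqrt_sq (norm_nonneg _)]

theorem ae_norm_sub_sq_sub_norm_sub_sq_ne {v w : E} (hvw : v ≠ w) (r : ℝ) :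
    ∀ᵐ x ∂μ, ‖x - v‖ ^ 2 - ‖x - w‖ ^ 2 ≠ r := by
  have hu : innerSL ℝ (w - v) ≠ 0 := fun h => hvw (sub_eq_zero.1 (norm_eq_zero.1
    (by rw [← innerSL_apply_norm ℝ, h, norm_zero]))).symm
  -- `‖x - v‖² - ‖x - w‖² = 2 ⟪w - v, x⟫ + ‖v‖² - ‖w‖²`
  refine measure_mono_null (fun x hx => ?_)
    (addHaar_preimage_singleton_eq_zero μ hu ((r - ‖v‖ ^ 2 + ‖w‖ ^ 2) / 2))
  have hx : ‖x - v‖ ^ 2 - ‖x - w‖ ^ 2 = r := by simpa using hx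
  rw [mem_preimage, mem_singleton_iff, innerSL_apply_apply, inner_sub_left, ← hx,
    norm_sub_sq_real, norm_sub_sq_real, real_inner_comm v, real_inner_comm w]
  ring

theorem ae_injective_norm_sub_sq_sub {ι : Type*} [Countable ι] [Nontrivial E] {y : ι → E}
    (hy : Function.Injective y) (ψ : ι → ℝ) :
    ∀ᵐ x ∂μ, Function.Injective ((fun j => ‖x - y j‖ ^ 2) - ψ) ∧
      ∀ i, ((fun j => ‖x - y j‖ ^ 2) - ψ) i ≠ 0 := by
  have hinj : ∀ i j, ∀ᵐ x ∂μ, ‖x - y i‖ ^ 2 - ψ i = ‖x - y j‖ ^ 2 - ψ j → i = j := by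
    intro i j
    by_cases hij : i = j
    · exact ae_of_all _ fun _ _ => hij
    filter_upwards [ae_norm_sub_sq_sub_norm_sub_sq_ne μ (hy.ne hij) (ψ i - ψ j)] with x hx htie
    exact absurd (by linarith) hx
  have hne : ∀ i, ∀ᵐ x ∂μ, ‖x - y i‖ ^ 2 - ψ i ≠ 0 := fun i =>
    (ae_norm_sub_sq_ne μ (y i) (ψ i)).mono fun _ hx => sub_ne_zero.2 hx
  filter_upwards [ae_all_iff.2 fun i => ae_all_iff.2 (hinj i), ae_all_iff.2 hne] with x hx hx0
  exact ⟨fun i j => hx i j, hx0⟩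

end Genericity

theorem convex_setOf_forall_pos {ι : Type*} : Convex ℝ {ψ : ι → ℝ | ∀ i, 0 < ψ i} :=
  convex_iff_forall_pos.2 fun _ hψ _ hφ _ _ ha hb _ i =>
    add_pos (mul_pos ha (hψ i)) (mul_pos hb (hφ i))

theorem coe_sum_smul_proj {ι : Type*} [Fintype ι] (α : ι → ℝ) :
    ⇑(∑ i, α i • (ContinuousLinearMap.proj i : (ι → ℝ) →L[ℝ] ℝ)) = fun ψ => ∑ i, α i * ψ i := by
  ext ψ
  simp

theorem KD_eq_integral_partialMin_add {d N : ℕ} (ρ : Measure (EuclideanSpace ℝ (Fin d)))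
    (y : Fin N → EuclideanSpace ℝ (Fin d)) (α : Fin N → ℝ) :
    KD ρ y α = fun ψ => (∫ x, partialMin ((fun j => ‖x - y j‖ ^ 2) - ψ) ∂ρ) +
      (∑ i, α i • (ContinuousLinearMap.proj i : (Fin N → ℝ) →L[ℝ] ℝ)) ψ := by
  rw [coe_sum_smul_proj]
  rfl

theorem RLagD_eq_preimage_minCell {d N : ℕ} (y : Fin N → EuclideanSpace ℝ (Fin d))
    (ψ : Fin N → ℝ) (i : Fin N) :
    RLagD y ψ i = (fun x => (fun j => ‖x - y j‖ ^ 2) - ψ) ⁻¹' minCell i := by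
  ext x
  simp [RLagD, LagD, minCell, and_comm]

theorem stmt0_general {d N : ℕ} (hd : 1 ≤ d) (hN : 0 < N)
    (ρ : Measure (EuclideanSpace ℝ (Fin d))) [IsProbabilityMeasure ρ]
    (hac : ρ ≪ volume)
    (y : Fin N → EuclideanSpace ℝ (Fin d)) (hy : Function.Injective y)
    (α : Fin N → ℝ) :
    ConcaveOn ℝ {ψ : Fin N → ℝ | ∀ i, 0 < ψ i} (KD ρ y α) ∧
    (∀ ψ : Fin N → ℝ, (∀ i, 0 < ψ i) →
      HasFDerivAt (KD ρ y α)
        (∑ i, ((α i - (ρ (RLagD y ψ i)).toReal) •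
          (ContinuousLinearMap.proj i : (Fin N → ℝ) →L[ℝ] ℝ))) ψ) ∧
    ContinuousOn (fun ψ : Fin N → ℝ => fun i => (ρ (RLagD y ψ i)).toReal)
      {ψ : Fin N → ℝ | ∀ i, 0 < ψ i} := by
  have : Nonempty (Fin N) := ⟨⟨0, hN⟩⟩
  have : Nonempty (Fin d) := ⟨⟨0, hd⟩⟩
  set c : EuclideanSpace ℝ (Fin d) → Fin N → ℝ := fun x j => ‖x - y j‖ ^ 2
  have hc : Measurable c := by fun_prop
  have hc0 : ∀ x, 0 ≤ c x := fun x j => sq_nonneg _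
  have hgen : ∀ ψ, ∀ᵐ x ∂ρ, Function.Injective (c x - ψ) ∧ ∀ i, (c x - ψ) i ≠ 0 := fun ψ =>
    hac.ae_le (ae_injective_norm_sub_sq_sub volume hy ψ)
  set ℓ := ∑ i, α i • (ContinuousLinearMap.proj i : (Fin N → ℝ) →L[ℝ] ℝ)
  simp only [KD_eq_integral_partialMin_add, RLagD_eq_preimage_minCell, ← Measure.real_def]
  refine ⟨?_, fun ψ _ => ?_, ?_⟩
  · exact ((concaveOn_integral_partialMin_sub (ρ := ρ) hc hc0).add
      (ℓ.toLinearMap.concaveOn convex_univ)).subset (subset_univ _) convex_setOf_forall_pos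
  · refine ((hasFDerivAt_integral_partialMin_sub hc hc0 (hgen ψ)).add
      ℓ.hasFDerivAt).congr_fderiv ?_
    ext φ
    simp [ℓ, sub_mul, Finset.sum_sub_distrib]
    ring
  · exact (continuous_pi fun i => continuous_iff_continuousAt.2 fun ψ =>
      continuousAt_measureReal_preimage_minCell hc (hgen ψ) i).continuousOn

/-- the dual functional `K` is concave on `(0,∞)^N` and continuously
differentiable there, with gradient `∇K(ψ) = α − G(ψ)` where `G i ψ = ρ(RLag_i(ψ))`. -/
theorem stmt0 {d N : ℕ} (hd : 1 ≤ d) (hN : 0 < N)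
    (ρ : Measure (EuclideanSpace ℝ (Fin d))) [IsProbabilityMeasure ρ]
    (hac : ρ ≪ volume)
    (hcs : ∃ Kc : Set (EuclideanSpace ℝ (Fin d)), IsCompact Kc ∧ ρ Kcᶜ = 0)
    (y : Fin N → EuclideanSpace ℝ (Fin d)) (hy : Function.Injective y)
    (α : Fin N → ℝ) (hα : ∀ i, 0 < α i) (hαs : ∑ i, α i < 1) :
    ConcaveOn ℝ {ψ : Fin N → ℝ | ∀ i, 0 < ψ i} (KD ρ y α) ∧
    (∀ ψ : Fin N → ℝ, (∀ i, 0 < ψ i) →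
      HasFDerivAt (KD ρ y α)
        (∑ i, ((α i - (ρ (RLagD y ψ i)).toReal) •
          (ContinuousLinearMap.proj i : (Fin N → ℝ) →L[ℝ] ℝ))) ψ) ∧
    ContinuousOn (fun ψ : Fin N → ℝ => fun i => (ρ (RLagD y ψ i)).toReal)
      {ψ : Fin N → ℝ | ∀ i, 0 < ψ i} :=
  stmt0_general hd hN ρ hac y hy α
end
end

section
/- The dual functional K of semi-discrete partial optimal transport attains its maximum on (0,∞)^N; moreover, ψ ∈ (0,∞)^N is a maximizer of K if and only if ρ(RLag_i(ψ)) = α_i for every i ∈ {1,…,N}. -/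
open MeasureTheory Real Filter Set

noncomputable section

/-!
`K` is concave with supergradient `α - (ρ(RLag_i ψ))_i`: on `RLag_i(ψ)` the integrand equals
`‖x - y_i‖² - ψ_i`, and distinct cells meet only in hyperplanes, which are `ρ`-null. The boundary
of a cell lies in a sphere and finitely many hyperplanes, so `ψ ↦ ρ(RLag_i ψ)` is continuous.
Since `ρ` has bounded support, `K ψ ≤ M - (1 - ∑ α) max_i ψ_i` on the closed orthant, so `K` attains
its maximum there. At a maximizer, raising `ψ_i` (or lowering it, when `ψ_i > 0`) and letting the
step tend to `0` gives `ρ(RLag_i ψ) ≥ α_i` (or `≤ α_i`); for `ψ_i = 0` the cell would lie in the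
null set `{y_i}`, so the maximizer is positive. Conversely, a vanishing supergradient certifies a
maximum.
-/

open scoped InnerProductSpace Topology

section LevelSets

variable {F : Type*} [NormedAddCommGroup F] [InnerProductSpace ℝ F] [FiniteDimensional ℝ F]
  [MeasurableSpace F] [BorelSpace F] (μ : Measure F) [μ.IsAddHaarMeasure]

theorem addHaar_setOf_inner_eq {v : F} (hv : v ≠ 0) (c : ℝ) : μ {x | ⟪v, x⟫_ℝ = c} = 0 := by
  let A : AffineSubspace ℝ F :=
    { carrier := {x | ⟪v, x⟫_ℝ = c}
      smul_vsub_vadd_mem' := fun t p q r hp hq hr => by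
        simp_all [inner_add_right, inner_smul_right, inner_sub_right] }
  have hA : A ≠ ⊤ := fun h => by
    have h0 : (0 : F) ∈ A := h ▸ AffineSubspace.mem_top ℝ F 0
    have hvA : v ∈ A := h ▸ AffineSubspace.mem_top ℝ F v
    have h0' : ⟪v, 0⟫_ℝ = c := h0
    have hvA' : ⟪v, v⟫_ℝ = c := hvA
    rw [inner_zero_right] at h0'
    exact hv (inner_self_eq_zero.1 (hvA'.trans h0'.symm))
  exact Measure.addHaar_affineSubspace μ A hA

theorem addHaar_setOf_norm_sub_sq_sub_eq {a b : F} (hab : a ≠ b) (s t : ℝ) :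
    μ {x | ‖x - a‖ ^ 2 - s = ‖x - b‖ ^ 2 - t} = 0 := by
  refine measure_mono_null (fun x hx => ?_)
    (addHaar_setOf_inner_eq μ (sub_ne_zero.2 hab.symm) ((s - t + ‖b‖ ^ 2 - ‖a‖ ^ 2) / 2))
  simp only [mem_ofPred_eq, norm_sub_sq_real] at hx ⊢
  rw [inner_sub_left]
  linarith [real_inner_comm a x, real_inner_comm b x]

theorem addHaar_setOf_norm_sub_sq_eq [Nontrivial F] (a : F) (r : ℝ) :
    μ {x | ‖x - a‖ ^ 2 = r} = 0 :=
  measure_mono_null (fun x (hx : ‖x - a‖ ^ 2 = r) => by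
    rw [mem_sphere_iff_norm, ← hx, Real.sqrt_sq (norm_nonneg _)]) (Measure.addHaar_sphere μ a √r)

end LevelSets

theorem eventually_le_iff_of_ne {X α : Type*} [TopologicalSpace X] [LinearOrder α]
    [TopologicalSpace α] [OrderClosedTopology α] {f g : X → α} {p : X}
    (hf : ContinuousAt f p) (hg : ContinuousAt g p) (h : f p ≠ g p) :
    ∀ᶠ q in 𝓝 p, (f q ≤ g q ↔ f p ≤ g p) := by
  rcases h.lt_or_gt with h | h
  · filter_upwards [hf.eventually_lt hg h] with q hq using iff_of_true hq.le h.le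
  · filter_upwards [hg.eventually_lt hf h] with q hq using iff_of_false hq.not_ge h.not_ge

variable {d N : ℕ}

def dualIntegrand (y : Fin N → EuclideanSpace ℝ (Fin d)) (ψ : Fin N → ℝ)
    (x : EuclideanSpace ℝ (Fin d)) : ℝ :=
  min 0 (⨅ i, (‖x - y i‖ ^ 2 - ψ i))

section Integrand

variable (y : Fin N → EuclideanSpace ℝ (Fin d)) (ψ ψ' : Fin N → ℝ) (x : EuclideanSpace ℝ (Fin d))

theorem dualIntegrand_nonpos : dualIntegrand y ψ x ≤ 0 := min_le_left _ _

theorem dualIntegrand_le (i : Fin N) : dualIntegrand y ψ x ≤ ‖x - y i‖ ^ 2 - ψ i :=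
  (min_le_right _ _).trans (ciInf_le (Finite.bddBelow_range _) i)

theorem dualIntegrand_zero : dualIntegrand y 0 x = 0 :=
  min_eq_left (Real.iInf_nonneg fun i => by simp only [Pi.zero_apply, sub_zero]; positivity)

theorem dualIntegrand_le_add_dist : dualIntegrand y ψ x ≤ dualIntegrand y ψ' x + dist ψ ψ' := by
  have hinf : ⨅ i, (‖x - y i‖ ^ 2 - ψ i) ≤ (⨅ i, (‖x - y i‖ ^ 2 - ψ' i)) + dist ψ ψ' := by
    cases isEmpty_or_nonempty (Fin N)
    · simp [dist_nonneg]
    rw [← sub_le_iff_le_add]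
    refine le_ciInf fun j => ?_
    have hj := (abs_le.1 ((Real.dist_eq _ _).symm.trans_le (dist_le_pi_dist ψ ψ' j))).1
    linarith [ciInf_le (Finite.bddBelow_range fun i => ‖x - y i‖ ^ 2 - ψ i) j]
  calc dualIntegrand y ψ x ≤ min (0 + dist ψ ψ') ((⨅ i, (‖x - y i‖ ^ 2 - ψ' i)) + dist ψ ψ') :=
        min_le_min (by simp) hinf
    _ = dualIntegrand y ψ' x + dist ψ ψ' := min_add_add_right _ _ _

theorem abs_dualIntegrand_le : |dualIntegrand y ψ x| ≤ ‖ψ‖ := by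
  have h := dualIntegrand_le_add_dist y 0 ψ x
  rw [dualIntegrand_zero, dist_zero_left] at h
  rw [abs_of_nonpos (dualIntegrand_nonpos y ψ x)]
  linarith

theorem measurable_dualIntegrand : Measurable (dualIntegrand y ψ) :=
  measurable_const.min (Measurable.iInf fun i => (by fun_prop : Continuous _).measurable)

theorem integrable_dualIntegrand (ρ : Measure (EuclideanSpace ℝ (Fin d))) [IsFiniteMeasure ρ] :
    Integrable (dualIntegrand y ψ) ρ :=
  (integrable_const ‖ψ‖).mono' (measurable_dualIntegrand y ψ).aestronglyMeasurable
    (ae_of_all _ fun x => abs_dualIntegrand_le y ψ x)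

end Integrand

section Cells

variable {y : Fin N → EuclideanSpace ℝ (Fin d)} {ψ : Fin N → ℝ} {i : Fin N}
  {x : EuclideanSpace ℝ (Fin d)}

theorem isClosed_RLagD (y : Fin N → EuclideanSpace ℝ (Fin d)) (ψ : Fin N → ℝ) (i : Fin N) :
    IsClosed (RLagD y ψ i) := by
  refine IsClosed.inter ?_ (isClosed_le (by fun_prop) continuous_const)
  simp only [LagD, ofPred_forall]
  exact isClosed_iInter fun j => isClosed_le (by fun_prop) (by fun_prop)

theorem measurableSet_RLagD (y : Fin N → EuclideanSpace ℝ (Fin d)) (ψ : Fin N → ℝ) (i : Fin N) :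
    MeasurableSet (RLagD y ψ i) :=
  (isClosed_RLagD y ψ i).measurableSet

theorem dualIntegrand_eq_of_mem_RLagD (hx : x ∈ RLagD y ψ i) :
    dualIntegrand y ψ x = ‖x - y i‖ ^ 2 - ψ i := by
  have : Nonempty (Fin N) := ⟨i⟩
  rw [dualIntegrand, le_antisymm (ciInf_le (Finite.bddBelow_range _) i) (le_ciInf fun j => hx.1 j),
    min_eq_right (sub_nonpos.2 hx.2)]

theorem exists_mem_RLagD_of_dualIntegrand_neg (hx : dualIntegrand y ψ x < 0) :
    ∃ i, x ∈ RLagD y ψ i := by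
  have hinf : ⨅ i, (‖x - y i‖ ^ 2 - ψ i) < 0 := lt_of_not_ge fun h => hx.not_ge (min_eq_left h).ge
  have : Nonempty (Fin N) := not_isEmpty_iff.1 fun _ => by simp at hinf
  obtain ⟨i, hi⟩ := exists_eq_ciInf_of_finite (f := fun i => ‖x - y i‖ ^ 2 - ψ i)
  refine ⟨i, fun j => hi ▸ ciInf_le (Finite.bddBelow_range _) j, ?_⟩
  rw [mem_ofPred_eq, ← sub_nonpos, hi]
  exact hinf.le

theorem dualIntegrand_sub_le_sum_indicator (ψ' : Fin N → ℝ)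
    (hx : ∀ i j, i ≠ j → ‖x - y i‖ ^ 2 - ψ i ≠ ‖x - y j‖ ^ 2 - ψ j) :
    dualIntegrand y ψ' x - dualIntegrand y ψ x ≤
      ∑ i, (RLagD y ψ i).indicator (fun _ => ψ i - ψ' i) x := by
  by_cases h : ∃ i, x ∈ RLagD y ψ i
  · obtain ⟨i, hi⟩ := h
    rw [Finset.sum_eq_single i (fun j _ hji => indicator_of_notMem
        (fun hj => hx j i hji (le_antisymm (hj.1 i) (hi.1 j))) _) (by simp),
      indicator_of_mem hi, dualIntegrand_eq_of_mem_RLagD hi]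
    linarith [dualIntegrand_le y ψ' x i]
  · push Not at h
    rw [Finset.sum_eq_zero fun i _ => indicator_of_notMem (h i) _]
    have : dualIntegrand y ψ x = 0 := (dualIntegrand_nonpos y ψ x).antisymm <| not_lt.1 fun hneg =>
      (exists_mem_RLagD_of_dualIntegrand_neg hneg).elim h
    linarith [dualIntegrand_nonpos y ψ' x]

theorem eventually_mem_RLagD_iff (hsph : ‖x - y i‖ ^ 2 ≠ ψ i)
    (hties : ∀ j, j ≠ i → ‖x - y i‖ ^ 2 - ψ i ≠ ‖x - y j‖ ^ 2 - ψ j) :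
    ∀ᶠ ψ' in 𝓝 ψ, x ∈ RLagD y ψ' i ↔ x ∈ RLagD y ψ i := by
  have hLag : ∀ j, ∀ᶠ ψ' in 𝓝 ψ, (‖x - y i‖ ^ 2 - ψ' i ≤ ‖x - y j‖ ^ 2 - ψ' j ↔
      ‖x - y i‖ ^ 2 - ψ i ≤ ‖x - y j‖ ^ 2 - ψ j) := by
    intro j
    rcases eq_or_ne j i with rfl | hj
    · simp
    · exact eventually_le_iff_of_ne (continuous_const.sub (continuous_apply i)).continuousAt
        (continuous_const.sub (continuous_apply j)).continuousAt (hties j hj)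
  filter_upwards [eventually_all.2 hLag,
    eventually_le_iff_of_ne continuousAt_const (continuous_apply i).continuousAt hsph]
    with ψ' hLag' hball
  exact and_congr (forall_congr' hLag') hball

end Cells

section AbsolutelyContinuous

variable {ρ : Measure (EuclideanSpace ℝ (Fin d))} (hac : ρ ≪ volume)
include hac

theorem ae_norm_sub_sq_ne_s1 [NeZero d] (a : EuclideanSpace ℝ (Fin d)) (r : ℝ) :
    ∀ᵐ x ∂ρ, ‖x - a‖ ^ 2 ≠ r :=
  measure_eq_zero_iff_ae_notMem.1 (hac (addHaar_setOf_norm_sub_sq_eq volume a r))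

theorem ae_norm_sub_sq_sub_ne {y : Fin N → EuclideanSpace ℝ (Fin d)} (hy : Function.Injective y)
    (ψ : Fin N → ℝ) :
    ∀ᵐ x ∂ρ, ∀ i j, i ≠ j → ‖x - y i‖ ^ 2 - ψ i ≠ ‖x - y j‖ ^ 2 - ψ j := by
  refine ae_all_iff.2 fun i => ae_all_iff.2 fun j => ?_
  rcases eq_or_ne i j with rfl | hij
  · exact ae_of_all _ fun x h => (h rfl).elim
  · filter_upwards [measure_eq_zero_iff_ae_notMem.1
      (hac (addHaar_setOf_norm_sub_sq_sub_eq volume (hy.ne hij) (ψ i) (ψ j)))] with x hx _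
      using hx

theorem continuous_measure_RLagD [NeZero d] [IsFiniteMeasure ρ]
    {y : Fin N → EuclideanSpace ℝ (Fin d)} (hy : Function.Injective y) (i : Fin N) :
    Continuous fun ψ => ρ (RLagD y ψ i) := by
  refine continuous_iff_continuousAt.2 fun ψ => ?_
  refine tendsto_measure_of_ae_tendsto_indicator_of_isFiniteMeasure _
    (measurableSet_RLagD y ψ i) (fun ψ' => measurableSet_RLagD y ψ' i) ?_
  filter_upwards [ae_norm_sub_sq_ne_s1 hac (y i) (ψ i), ae_norm_sub_sq_sub_ne hac hy ψ]
    with x hsph hties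
  exact eventually_mem_RLagD_iff hsph fun j hj => hties i j hj.symm

end AbsolutelyContinuous

section Dual

variable {ρ : Measure (EuclideanSpace ℝ (Fin d))} {y : Fin N → EuclideanSpace ℝ (Fin d)}
  {α : Fin N → ℝ}

theorem KD_eq_integral_add (ψ : Fin N → ℝ) :
    KD ρ y α ψ = ∫ x, dualIntegrand y ψ x ∂ρ + ∑ i, α i * ψ i := rfl

theorem continuous_KD [IsProbabilityMeasure ρ] : Continuous (KD ρ y α) := by
  have hint : LipschitzWith 1 fun ψ => ∫ x, dualIntegrand y ψ x ∂ρ :=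
    LipschitzWith.of_le_add fun ψ ψ' => by
      calc ∫ x, dualIntegrand y ψ x ∂ρ ≤ ∫ x, (dualIntegrand y ψ' x + dist ψ ψ') ∂ρ :=
            integral_mono (integrable_dualIntegrand y ψ ρ)
              ((integrable_dualIntegrand y ψ' ρ).add (integrable_const _))
              fun x => dualIntegrand_le_add_dist y ψ ψ' x
        _ = ∫ x, dualIntegrand y ψ' x ∂ρ + dist ψ ψ' := by
            rw [integral_add (integrable_dualIntegrand y ψ' ρ) (integrable_const _)]
            simp
  exact hint.continuous.add (by fun_prop)

theorem KD_le [IsProbabilityMeasure ρ] {M : ℝ} {i : Fin N}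
    (hM : ∀ᵐ x ∂ρ, ‖x - y i‖ ^ 2 ≤ M) (ψ : Fin N → ℝ) :
    KD ρ y α ψ ≤ M - ψ i + ∑ j, α j * ψ j := by
  have : ∫ x, dualIntegrand y ψ x ∂ρ ≤ ∫ _, (M - ψ i) ∂ρ :=
    integral_mono_ae (integrable_dualIntegrand y ψ ρ) (integrable_const _) <| by
      filter_upwards [hM] with x hx using (dualIntegrand_le y ψ x i).trans (by linarith)
  rw [KD_eq_integral_add]
  simp only [integral_const, probReal_univ, one_smul] at this
  linarith

theorem KD_sub_le [IsFiniteMeasure ρ] (hac : ρ ≪ volume) (hy : Function.Injective y)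
    (ψ ψ' : Fin N → ℝ) :
    KD ρ y α ψ' - KD ρ y α ψ ≤ ∑ i, (α i - (ρ (RLagD y ψ i)).toReal) * (ψ' i - ψ i) := by
  have hcell : ∀ i, Integrable ((RLagD y ψ i).indicator fun _ => ψ i - ψ' i) ρ := fun i =>
    (integrable_const _).indicator (measurableSet_RLagD y ψ i)
  have hint : ∫ x, dualIntegrand y ψ' x ∂ρ - ∫ x, dualIntegrand y ψ x ∂ρ ≤
      ∑ i, (ρ (RLagD y ψ i)).toReal * (ψ i - ψ' i) := by
    rw [← integral_sub (integrable_dualIntegrand y ψ' ρ) (integrable_dualIntegrand y ψ ρ)]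
    calc _ ≤ ∫ x, ∑ i, (RLagD y ψ i).indicator (fun _ => ψ i - ψ' i) x ∂ρ := by
          refine integral_mono_ae ((integrable_dualIntegrand y ψ' ρ).sub
            (integrable_dualIntegrand y ψ ρ)) (integrable_finsetSum _ fun i _ => hcell i) ?_
          filter_upwards [ae_norm_sub_sq_sub_ne hac hy ψ] with x hx
          exact dualIntegrand_sub_le_sum_indicator ψ' hx
      _ = _ := by
          rw [integral_finsetSum _ fun i _ => hcell i]
          simp [integral_indicator_const _ (measurableSet_RLagD y ψ _), Measure.real]
  rw [KD_eq_integral_add, KD_eq_integral_add]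
  have : ∑ i, (α i - (ρ (RLagD y ψ i)).toReal) * (ψ' i - ψ i) =
      ∑ i, (ρ (RLagD y ψ i)).toReal * (ψ i - ψ' i) + (∑ i, α i * ψ' i - ∑ i, α i * ψ i) := by
    rw [← Finset.sum_sub_distrib, ← Finset.sum_add_distrib]
    exact Finset.sum_congr rfl fun i _ => by ring
  linarith

end Dual

section Optimality

variable {ρ : Measure (EuclideanSpace ℝ (Fin d))} [IsFiniteMeasure ρ] (hac : ρ ≪ volume)
  {y : Fin N → EuclideanSpace ℝ (Fin d)} (hy : Function.Injective y) {α ψ : Fin N → ℝ}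
  {S : Set (Fin N → ℝ)} {i : Fin N}
include hac hy

theorem mul_nonneg_of_isMaxOn_KD (hmax : IsMaxOn (KD ρ y α) S ψ) {s : ℝ}
    (hs : Function.update ψ i s ∈ S) :
    0 ≤ (α i - (ρ (RLagD y (Function.update ψ i s) i)).toReal) * (ψ i - s) := by
  have hsum := KD_sub_le (α := α) hac hy (Function.update ψ i s) ψ
  rw [Finset.sum_eq_single i (fun j _ hj => by simp [Function.update_of_ne hj]) (by simp),
    Function.update_self] at hsum
  linarith [isMaxOn_iff.1 hmax _ hs]

theorem tendsto_measure_RLagD_update [NeZero d] :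
    Tendsto (fun s => (ρ (RLagD y (Function.update ψ i s) i)).toReal) (𝓝 (ψ i))
      (𝓝 (ρ (RLagD y ψ i)).toReal) := by
  have h := ((continuous_measure_RLagD hac hy i).comp
    (continuous_const (y := ψ) |>.update i continuous_id)).tendsto (ψ i)
  simp only [Function.comp_def, id, Function.update_eq_self] at h
  exact (ENNReal.tendsto_toReal (measure_ne_top _ _)).comp h

theorem le_measure_RLagD_of_isMaxOn [NeZero d] (hmax : IsMaxOn (KD ρ y α) S ψ)
    (hS : ∀ᶠ s in 𝓝[>] ψ i, Function.update ψ i s ∈ S) :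
    α i ≤ (ρ (RLagD y ψ i)).toReal := by
  refine ge_of_tendsto ((tendsto_measure_RLagD_update hac hy).mono_left
    (nhdsWithin_le_nhds (s := Ioi (ψ i)))) ?_
  filter_upwards [hS, self_mem_nhdsWithin] with s hs (hlt : ψ i < s)
  nlinarith [mul_nonneg_of_isMaxOn_KD hac hy hmax hs]

theorem measure_RLagD_le_of_isMaxOn [NeZero d] (hmax : IsMaxOn (KD ρ y α) S ψ)
    (hS : ∀ᶠ s in 𝓝[<] ψ i, Function.update ψ i s ∈ S) :
    (ρ (RLagD y ψ i)).toReal ≤ α i := by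
  refine le_of_tendsto ((tendsto_measure_RLagD_update hac hy).mono_left
    (nhdsWithin_le_nhds (s := Iio (ψ i)))) ?_
  filter_upwards [hS, self_mem_nhdsWithin] with s hs (hlt : s < ψ i)
  nlinarith [mul_nonneg_of_isMaxOn_KD hac hy hmax hs]

theorem pos_of_isMaxOn_KD_Ici [NeZero d] (hα : ∀ i, 0 < α i)
    (hmax : IsMaxOn (KD ρ y α) (Ici 0) ψ) (hψ : 0 ≤ ψ) (i : Fin N) : 0 < ψ i := by
  by_contra! hψi
  have hS : ∀ᶠ s in 𝓝[>] ψ i, Function.update ψ i s ∈ Ici 0 := by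
    filter_upwards [self_mem_nhdsWithin] with s (hs : ψ i < s)
    exact (Function.forall_update_iff ψ fun _ t => 0 ≤ t).2
      ⟨(hψ i).trans hs.le, fun j _ => hψ j⟩
  have hnull : ρ (RLagD y ψ i) = 0 := by
    refine measure_mono_null (fun x hx => ?_) (hac (measure_singleton (y i)))
    have : ‖x - y i‖ ^ 2 ≤ 0 := hx.2.trans hψi
    simpa [sub_eq_zero] using this
  have := le_measure_RLagD_of_isMaxOn hac hy hmax hS
  rw [hnull, ENNReal.toReal_zero] at this
  exact (hα i).not_ge this

end Optimality

theorem exists_ae_norm_sub_sq_le {ρ : Measure (EuclideanSpace ℝ (Fin d))}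
    {Kc : Set (EuclideanSpace ℝ (Fin d))} (hKc : Bornology.IsBounded Kc) (hρKc : ρ Kcᶜ = 0)
    (y : Fin N → EuclideanSpace ℝ (Fin d)) : ∃ M, ∀ i, ∀ᵐ x ∂ρ, ‖x - y i‖ ^ 2 ≤ M := by
  obtain ⟨r, hr⟩ := hKc.exists_norm_le
  obtain ⟨r', hr'⟩ := (finite_range y).isBounded.exists_norm_le
  refine ⟨(r + r') ^ 2, fun i => ?_⟩
  filter_upwards [mem_ae_iff.2 hρKc] with x hx
  have hxy : ‖x - y i‖ ≤ r + r' :=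
    (norm_sub_le x (y i)).trans (add_le_add (hr x hx) (hr' _ (mem_range_self i)))
  exact pow_le_pow_left₀ (norm_nonneg _) hxy 2

theorem exists_isMaxOn_KD_Ici {ρ : Measure (EuclideanSpace ℝ (Fin d))} [IsProbabilityMeasure ρ]
    {y : Fin N → EuclideanSpace ℝ (Fin d)} {α : Fin N → ℝ} {M : ℝ}
    (hM : ∀ i, ∀ᵐ x ∂ρ, ‖x - y i‖ ^ 2 ≤ M) (hα : ∀ i, 0 < α i) (hαs : ∑ i, α i < 1) :
    ∃ ψ ∈ Ici 0, IsMaxOn (KD ρ y α) (Ici 0) ψ := by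
  refine continuous_KD.continuousOn.exists_isMaxOn' isClosed_Ici self_mem_Ici ?_
  set R := max 0 ((M - KD ρ y α 0) / (1 - ∑ i, α i))
  filter_upwards [(tendsto_norm_cocompact_atTop.eventually_gt_atTop R).filter_mono inf_le_left,
    mem_inf_of_right (mem_principal_self _)] with ψ hψR (hψ : 0 ≤ ψ)
  obtain ⟨j, hj⟩ : ∃ j, R < ψ j := by
    by_contra! h
    exact hψR.not_ge ((pi_norm_le_iff_of_nonneg (le_max_left _ _)).2 fun j =>
      (abs_of_nonneg (hψ j)).trans_le (h j))
  have : Nonempty (Fin N) := ⟨j⟩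
  obtain ⟨i, hi⟩ := Finite.exists_max ψ
  have hsum : ∑ k, α k * ψ k ≤ (∑ k, α k) * ψ i := by
    rw [Finset.sum_mul]
    exact Finset.sum_le_sum fun k _ => mul_le_mul_of_nonneg_left (hi k) (hα k).le
  have hR : (M - KD ρ y α 0) / (1 - ∑ k, α k) < ψ i :=
    (le_max_right _ _).trans_lt (hj.trans_le (hi j))
  rw [div_lt_iff₀ (by linarith)] at hR
  linarith [KD_le (α := α) (hM i) ψ]

theorem stmt1_general {d N : ℕ} (hd : 1 ≤ d)
    (ρ : Measure (EuclideanSpace ℝ (Fin d))) [IsProbabilityMeasure ρ]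
    (hac : ρ ≪ volume)
    (hcs : ∃ Kc : Set (EuclideanSpace ℝ (Fin d)), IsCompact Kc ∧ ρ Kcᶜ = 0)
    (y : Fin N → EuclideanSpace ℝ (Fin d)) (hy : Function.Injective y)
    (α : Fin N → ℝ) (hα : ∀ i, 0 < α i) (hαs : ∑ i, α i < 1) :
    (∃ ψ : Fin N → ℝ, (∀ i, 0 < ψ i) ∧
      IsMaxOn (KD ρ y α) {ψ' : Fin N → ℝ | ∀ i, 0 < ψ' i} ψ) ∧
    (∀ ψ : Fin N → ℝ, (∀ i, 0 < ψ i) →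
      (IsMaxOn (KD ρ y α) {ψ' : Fin N → ℝ | ∀ i, 0 < ψ' i} ψ ↔
        ∀ i, (ρ (RLagD y ψ i)).toReal = α i)) := by
  have : NeZero d := ⟨by omega⟩
  obtain ⟨Kc, hKc, hρKc⟩ := hcs
  obtain ⟨M, hM⟩ := exists_ae_norm_sub_sq_le hKc.isBounded hρKc y
  obtain ⟨ψ₀, hψ₀, hmax₀⟩ := exists_isMaxOn_KD_Ici hM hα hαs
  refine ⟨⟨ψ₀, pos_of_isMaxOn_KD_Ici hac hy hα hmax₀ hψ₀,
    hmax₀.on_subset fun ψ hψ => fun i => (hψ i).le⟩, fun ψ hψ => ⟨fun hmax i => ?_, fun h => ?_⟩⟩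
  · have hS : ∀ᶠ s in 𝓝 (ψ i), Function.update ψ i s ∈ {ψ' : Fin N → ℝ | ∀ i, 0 < ψ' i} := by
      filter_upwards [Ioi_mem_nhds (hψ i)] with s (hs : 0 < s)
      exact (Function.forall_update_iff ψ fun _ t => 0 < t).2 ⟨hs, fun j _ => hψ j⟩
    exact (measure_RLagD_le_of_isMaxOn hac hy hmax (nhdsWithin_le_nhds hS)).antisymm
      (le_measure_RLagD_of_isMaxOn hac hy hmax (nhdsWithin_le_nhds hS))
  · refine isMaxOn_iff.2 fun ψ' _ => ?_
    have := KD_sub_le (α := α) hac hy ψ ψ'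
    simp only [h, sub_self, zero_mul, Finset.sum_const_zero] at this
    linarith

/-- the dual functional `K` attains its maximum on `(0,∞)^N`, and
`ψ ∈ (0,∞)^N` is a maximizer iff `ρ(RLag_i(ψ)) = α_i` for every `i`. -/
theorem stmt1 {d N : ℕ} (hd : 1 ≤ d) (hN : 0 < N)
    (ρ : Measure (EuclideanSpace ℝ (Fin d))) [IsProbabilityMeasure ρ]
    (hac : ρ ≪ volume)
    (hcs : ∃ Kc : Set (EuclideanSpace ℝ (Fin d)), IsCompact Kc ∧ ρ Kcᶜ = 0)
    (y : Fin N → EuclideanSpace ℝ (Fin d)) (hy : Function.Injective y)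
    (α : Fin N → ℝ) (hα : ∀ i, 0 < α i) (hαs : ∑ i, α i < 1) :
    (∃ ψ : Fin N → ℝ, (∀ i, 0 < ψ i) ∧
      IsMaxOn (KD ρ y α) {ψ' : Fin N → ℝ | ∀ i, 0 < ψ' i} ψ) ∧
    (∀ ψ : Fin N → ℝ, (∀ i, 0 < ψ i) →
      (IsMaxOn (KD ρ y α) {ψ' : Fin N → ℝ | ∀ i, 0 < ψ' i} ψ ↔
        ∀ i, (ρ (RLagD y ψ i)).toReal = α i)) :=
  stmt1_general hd ρ hac hcs y hy α hα hαs
end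
end

section
/- Let ρ be the uniform (Lebesgue) probability measure on [0,1], N = 2, y_1 = 0, y_2 = 1, and G_1(ψ) = ρ(RLag_1(ψ)). Then the function t ↦ G_1((1/4 + t, 1/4)) has right derivative 1/2 and left derivative 1 at t = 0; in particular, G = (G_1, G_2) is not differentiable at ψ⁰ = (1/4, 1/4). -/
open MeasureTheory Real Filter Set

noncomputable section

/-- The (unrestricted) one-dimensional Laguerre cell of index `i`. -/
def Lag1 {N : ℕ} (y ψ : Fin N → ℝ) (i : Fin N) : Set ℝ :=
  {x : ℝ | ∀ j, (x - y i) ^ 2 - ψ i ≤ (x - y j) ^ 2 - ψ j}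

/-- The restricted one-dimensional Laguerre cell of index `i`. -/
def RLag1 {N : ℕ} (y ψ : Fin N → ℝ) (i : Fin N) : Set ℝ :=
  Lag1 y ψ i ∩ Set.Icc (y i - Real.sqrt (ψ i)) (y i + Real.sqrt (ψ i))

/-- The `ρ`-mass of the `i`-th restricted Laguerre cell when `ρ` is the uniform
probability measure on `[0,1]`. -/
def Gunif (ψ : Fin 2 → ℝ) (i : Fin 2) : ℝ :=
  (volume (RLag1 ![(0 : ℝ), 1] ψ i ∩ Set.Icc (0 : ℝ) 1)).toReal

lemma gval (t : ℝ) (h1 : -(1/4) < t) (h2 : t < 1/2) :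
    Gunif ![1/4 + t, 1/4] 0 = min (Real.sqrt (1/4 + t)) ((1 + t)/2) := by
  have hs : Real.sqrt (1/4 + t) ≥ 0 := Real.sqrt_nonneg _
  have hset : RLag1 ![(0:ℝ), 1] ![1/4 + t, 1/4] 0 ∩ Set.Icc (0:ℝ) 1 =
      Set.Icc 0 (min (Real.sqrt (1/4 + t)) ((1 + t)/2)) := by
    ext x
    simp only [RLag1, Lag1, Fin.forall_fin_two, Set.mem_inter_iff, Set.mem_setOf_eq,
      Set.mem_Icc, Matrix.cons_val_zero, Matrix.cons_val_one, Matrix.head_cons]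
    constructor
    · rintro ⟨⟨⟨-, hle⟩, -, hsq⟩, hx0, hx1⟩
      exact ⟨hx0, le_min (by linarith) (by nlinarith)⟩
    · rintro ⟨hx0, hxm⟩
      have hxs := le_trans hxm (min_le_left _ _)
      have hxl := le_trans hxm (min_le_right _ _)
      exact ⟨⟨⟨le_rfl, by nlinarith⟩, by linarith, by linarith⟩, hx0, by linarith⟩
  rw [Gunif, hset, Real.volume_Icc,
    ENNReal.toReal_ofReal (by rw [sub_zero]; exact le_min hs (by linarith)), sub_zero]

lemma sqrt_quarter : Real.sqrt (1/4) = 1/2 := by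
  rw [show (1/4 : ℝ) = (1/2)^2 by norm_num, Real.sqrt_sq (by norm_num)]

lemma gval0 : Gunif ![1/4, 1/4] 0 = 1/2 := by
  have := gval 0 (by norm_num) (by norm_num)
  simp only [add_zero] at this
  rw [this, sqrt_quarter]
  norm_num

lemma right_lim :
    Filter.Tendsto
      (fun t : ℝ => (Gunif ![1 / 4 + t, 1 / 4] 0 - Gunif ![1 / 4, 1 / 4] 0) / t)
      (nhdsWithin 0 (Set.Ioi 0)) (nhds (1 / 2)) := by
  have hev : ∀ᶠ t in nhdsWithin (0:ℝ) (Set.Ioi 0),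
      (Gunif ![1 / 4 + t, 1 / 4] 0 - Gunif ![1 / 4, 1 / 4] 0) / t = 1/2 := by
    filter_upwards [Ioo_mem_nhdsGT_of_mem (by norm_num : (0:ℝ) ∈ Set.Ico 0 (1/2))]
      with t ht
    obtain ⟨ht0, ht1⟩ := ht
    have hmin : min (Real.sqrt (1/4 + t)) ((1 + t)/2) = (1 + t)/2 := by
      refine min_eq_right ?_
      have : ((1 + t)/2)^2 ≤ 1/4 + t := by nlinarith
      nlinarith [Real.sq_sqrt (by linarith : (0:ℝ) ≤ 1/4 + t),
        Real.sqrt_nonneg (1/4 + t)]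
    rw [gval t (by linarith) ht1, gval0, hmin]
    field_simp
    ring
  exact Tendsto.congr' (hev.mono fun t h => h.symm) tendsto_const_nhds

lemma sqrt_deriv : HasDerivAt (fun t : ℝ => Real.sqrt (1/4 + t)) 1 0 := by
  have h1 : HasDerivAt (fun t : ℝ => 1/4 + t) 1 0 := by
    simpa using (hasDerivAt_id (0:ℝ)).const_add ((1:ℝ)/4)
  have h2 : HasDerivAt Real.sqrt (1/(2*Real.sqrt (1/4))) ((fun t : ℝ => 1/4 + t) 0) := by
    simpa using Real.hasDerivAt_sqrt (by norm_num : (1/4 : ℝ) ≠ 0)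
  have h3 := h2.comp 0 h1
  have he : (1/(2*Real.sqrt (1/4))) * 1 = 1 := by rw [sqrt_quarter]; norm_num
  rw [he] at h3
  exact h3

lemma left_lim :
    Filter.Tendsto
      (fun t : ℝ => (Gunif ![1 / 4 + t, 1 / 4] 0 - Gunif ![1 / 4, 1 / 4] 0) / t)
      (nhdsWithin 0 (Set.Iio 0)) (nhds 1) := by
  have hslope : Filter.Tendsto (slope (fun t : ℝ => Real.sqrt (1/4 + t)) 0)
      (nhdsWithin 0 {(0:ℝ)}ᶜ) (nhds 1) :=
    hasDerivAt_iff_tendsto_slope.mp sqrt_deriv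
  have hsub : Filter.Tendsto (slope (fun t : ℝ => Real.sqrt (1/4 + t)) 0)
      (nhdsWithin 0 (Set.Iio 0)) (nhds 1) :=
    hslope.mono_left (nhdsWithin_mono _ (fun x hx => ne_of_lt hx))
  refine hsub.congr' ?_
  filter_upwards [Ioo_mem_nhdsLT_of_mem (by norm_num : (0:ℝ) ∈ Set.Ioc (-(1/4)) 0)]
    with t ht
  obtain ⟨ht0, ht1⟩ := ht
  have hmin : min (Real.sqrt (1/4 + t)) ((1 + t)/2) = Real.sqrt (1/4 + t) := by
    refine min_eq_left ?_
    have hsq : (Real.sqrt (1/4 + t))^2 = 1/4 + t :=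
      Real.sq_sqrt (by linarith)
    nlinarith [Real.sqrt_nonneg (1/4 + t)]
  rw [slope_def_field, gval t (by linarith) (by linarith), gval0, hmin, sub_zero, add_zero, sqrt_quarter]

/-- with `ρ` uniform on `[0,1]`, `y = (0,1)` and `ψ⁰ = (1/4, 1/4)`, the
function `t ↦ G₁((1/4 + t, 1/4))` has right derivative `1/2` and left derivative `1`
at `t = 0`; in particular `G` is not differentiable at `ψ⁰`. -/
theorem stmt7 :
    Filter.Tendsto
      (fun t : ℝ => (Gunif ![1 / 4 + t, 1 / 4] 0 - Gunif ![1 / 4, 1 / 4] 0) / t)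
      (nhdsWithin 0 (Set.Ioi 0)) (nhds (1 / 2)) ∧
    Filter.Tendsto
      (fun t : ℝ => (Gunif ![1 / 4 + t, 1 / 4] 0 - Gunif ![1 / 4, 1 / 4] 0) / t)
      (nhdsWithin 0 (Set.Iio 0)) (nhds 1) ∧
    ¬ DifferentiableAt ℝ (fun ψ : Fin 2 → ℝ => (Gunif ψ : Fin 2 → ℝ))
        ![1 / 4, 1 / 4] := by
  refine ⟨right_lim, left_lim, ?_⟩
  intro hdiff
  -- the curve t ↦ ![1/4 + t, 1/4]
  set L : ℝ → (Fin 2 → ℝ) := fun t => ![1/4 + t, 1/4] with hL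
  have hLdiff : DifferentiableAt ℝ L 0 := by
    have : L = fun t : ℝ => (fun i : Fin 2 => ![(1:ℝ)/4, 1/4] i + t * ![(1:ℝ), 0] i) := by
      funext t i
      fin_cases i <;> simp [hL]
    rw [this]
    apply differentiableAt_pi.mpr
    intro i
    exact (differentiableAt_const _).add ((differentiableAt_id).mul_const _)
  have hL0 : L 0 = ![1/4, 1/4] := by
    funext i; fin_cases i <;> simp [hL]
  have hcomp : DifferentiableAt ℝ (fun t : ℝ => Gunif (L t) 0) 0 := by
    have h1 : DifferentiableAt ℝ (fun ψ : Fin 2 → ℝ => Gunif ψ 0) (L 0) := by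
      rw [hL0]
      exact (differentiableAt_pi.mp hdiff) 0
    exact h1.comp 0 hLdiff
  have hderiv : HasDerivAt (fun t : ℝ => Gunif (L t) 0)
      (deriv (fun t : ℝ => Gunif (L t) 0) 0) 0 := hcomp.hasDerivAt
  have hslope := hasDerivAt_iff_tendsto_slope.mp hderiv
  have hsl : ∀ t : ℝ, slope (fun t : ℝ => Gunif (L t) 0) 0 t =
      (Gunif ![1 / 4 + t, 1 / 4] 0 - Gunif ![1 / 4, 1 / 4] 0) / t := by
    intro t
    rw [slope_def_field, hL0, sub_zero]
  have hright : Filter.Tendsto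
      (fun t : ℝ => (Gunif ![1 / 4 + t, 1 / 4] 0 - Gunif ![1 / 4, 1 / 4] 0) / t)
      (nhdsWithin 0 (Set.Ioi 0)) (nhds (deriv (fun t : ℝ => Gunif (L t) 0) 0)) := by
    have := hslope.mono_left (nhdsWithin_mono _ (fun x (hx : x ∈ Set.Ioi 0) => ne_of_gt hx))
    exact this.congr hsl
  have hleft : Filter.Tendsto
      (fun t : ℝ => (Gunif ![1 / 4 + t, 1 / 4] 0 - Gunif ![1 / 4, 1 / 4] 0) / t)
      (nhdsWithin 0 (Set.Iio 0)) (nhds (deriv (fun t : ℝ => Gunif (L t) 0) 0)) := by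
    have := hslope.mono_left (nhdsWithin_mono _ (fun x (hx : x ∈ Set.Iio 0) => ne_of_lt hx))
    exact this.congr hsl
  have e1 : deriv (fun t : ℝ => Gunif (L t) 0) 0 = 1/2 :=
    tendsto_nhds_unique hright right_lim
  have e2 : deriv (fun t : ℝ => Gunif (L t) 0) 0 = 1 :=
    tendsto_nhds_unique hleft left_lim
  rw [e1] at e2
  norm_num at e2
end
end

section
/- Let ρ be a compactly supported absolutely continuous probability measure on ℝ, and let g : ℝ → ℝ be a convex, nondecreasing, continuously differentiable function with g(t) = 0 for t ≤ 0 and 0 ≤ g'(t) ≤ 1 for all t. Then the regularized dual functional K^g(ψ) = −∫_ℝ g(max_{1≤i≤N}(ψ_i − (x−y_i)²)) ρ(x) dx + Σ_i α_i ψ_i is concave on ℝ^N and continuously differentiable, with ∂K^g/∂ψ_i(ψ) = α_i − G^g_i(ψ), where G^g_i(ψ) = ∫_{Lag_i(ψ)} g'(ψ_i − (x−y_i)²) ρ(x) dx. -/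
open MeasureTheory Real Filter Set

noncomputable section

/-- The regularized mass of the `i`-th Laguerre cell, for a regularizing function `g`
and a density `f`. -/
def Gg {N : ℕ} (y : Fin N → ℝ) (g f : ℝ → ℝ) (ψ : Fin N → ℝ) (i : Fin N) : ℝ :=
  ∫ x in Lag1 y ψ i, deriv g (ψ i - (x - y i) ^ 2) * f x

/-- The regularized dual functional `K^g`. -/
def Kg {N : ℕ} (y α : Fin N → ℝ) (g f : ℝ → ℝ) (ψ : Fin N → ℝ) : ℝ :=
  -(∫ x, g (⨆ i, (ψ i - (x - y i) ^ 2)) * f x) + ∑ i, α i * ψ i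

/-!
The integrand `g (max_i (ψ_i - (x - y_i)²))` is convex in `ψ`, being a nondecreasing convex
function of a maximum of affine functions, so `K^g` is concave. Since the `y_i` are distinct, two
of the parabolas `ψ_i - (x - y_i)²` meet in at most one point, so for almost every `x` the maximum
is attained at a single index `i`, strictly. Near `ψ` the integrand is then `g (ψ_i - (x - y_i)²)`,
whose gradient is `g' (ψ_i - (x - y_i)²) e_i`, and `x` lies in `Lag_i(ψ)` and in no other cell.
The integrand is Lipschitz in `ψ` with constant `ρ(x)`, so differentiation under the integral
sign gives the gradient, and dominated convergence gives the continuity of `G^g`.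
-/

open Topology Function

theorem convexOn_integral {α E : Type*} [MeasurableSpace α] {μ : Measure α} [AddCommGroup E]
    [Module ℝ E] {s : Set E} {F : E → α → ℝ} (hs : Convex ℝ s)
    (hF : ∀ᵐ a ∂μ, ConvexOn ℝ s (F · a)) (hint : ∀ x ∈ s, Integrable (F x) μ) :
    ConvexOn ℝ s fun x => ∫ a, F x a ∂μ := by
  refine ⟨hs, fun x hx z hz a b ha hb hab => ?_⟩
  calc ∫ t, F (a • x + b • z) t ∂μ ≤ ∫ t, (a • F x t + b • F z t) ∂μ :=
        integral_mono_ae (hint _ (hs hx hz ha hb hab))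
          (((hint x hx).smul a).add ((hint z hz).smul b))
          (hF.mono fun _ h => h.2 hx hz ha hb hab)
    _ = a • ∫ t, F x t ∂μ + b • ∫ t, F z t ∂μ := by
        simp only [smul_eq_mul]
        rw [integral_add ((hint x hx).const_mul a) ((hint z hz).const_mul b), integral_const_mul,
          integral_const_mul]

theorem ConvexOn.comp_of_monotone {E : Type*} [AddCommGroup E] [Module ℝ E] {s : Set E}
    {φ : E → ℝ} {g : ℝ → ℝ} (hg : ConvexOn ℝ univ g) (hgm : Monotone g) (hφ : ConvexOn ℝ s φ) :
    ConvexOn ℝ s (g ∘ φ) :=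
  ⟨hφ.1, fun _ hx _ hz _ _ ha hb hab =>
    (hgm (hφ.2 hx hz ha hb hab)).trans (hg.2 trivial trivial ha hb hab)⟩

section FiniteSup

variable {ι : Type*}

theorem ConvexOn.ciSup [Finite ι] [Nonempty ι] {E : Type*} [AddCommGroup E] [Module ℝ E]
    {s : Set E} {F : ι → E → ℝ} (hF : ∀ i, ConvexOn ℝ s (F i)) :
    ConvexOn ℝ s fun x => ⨆ i, F i x := by
  refine ⟨(hF (Classical.arbitrary ι)).1, fun x hx z hz a b ha hb hab => ciSup_le fun i => ?_⟩
  have hle : ∀ w, F i w ≤ ⨆ j, F j w := fun w => le_ciSup (f := (F · w)) (finite_range _).bddAbove i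
  calc F i (a • x + b • z) ≤ a • F i x + b • F i z := (hF i).2 hx hz ha hb hab
    _ ≤ a • (⨆ i, F i x) + b • ⨆ i, F i z := by
        gcongr <;> apply hle

theorem LipschitzWith.ciSup [Finite ι] [Nonempty ι] {E : Type*} [PseudoMetricSpace E]
    {K : NNReal} {F : ι → E → ℝ} (hF : ∀ i, LipschitzWith K (F i)) :
    LipschitzWith K fun x => ⨆ i, F i x :=
  LipschitzWith.of_le_add_mul K fun x z => ciSup_le fun i =>
    ((hF i).le_add_mul x z).trans
      (by gcongr; exact le_ciSup (f := fun i => F i z) (finite_range _).bddAbove i)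

theorem exists_forall_lt_of_injective [Finite ι] [Nonempty ι] {h : ι → ℝ} (hinj : Injective h) :
    ∃ i, ∀ j ≠ i, h j < h i := by
  obtain ⟨i, hi⟩ := Finite.exists_max h
  exact ⟨i, fun j hj => (hi j).lt_of_ne (hinj.ne hj)⟩

variable [Fintype ι]

theorem convexOn_ciSup_sub [Nonempty ι] (c : ι → ℝ) :
    ConvexOn ℝ univ fun ψ : ι → ℝ => ⨆ i, (ψ i - c i) :=
  ConvexOn.ciSup fun i => ⟨convex_univ, fun _ _ _ _ a b _ _ hab => le_of_eq <| by
    simp only [Pi.add_apply, Pi.smul_apply, smul_eq_mul]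
    linear_combination c i * hab⟩

theorem lipschitzWith_ciSup_sub [Nonempty ι] (c : ι → ℝ) :
    LipschitzWith 1 fun ψ : ι → ℝ => ⨆ i, (ψ i - c i) :=
  LipschitzWith.ciSup fun i => by
    simpa using (LipschitzWith.eval (α := fun _ : ι => ℝ) i).sub (LipschitzWith.const (c i))

theorem lipschitzWith_comp_ciSup_sub [Nonempty ι] {g : ℝ → ℝ} (hg : LipschitzWith 1 g)
    (c : ι → ℝ) : LipschitzWith 1 fun ψ : ι → ℝ => g (⨆ i, (ψ i - c i)) := by
  simpa only [mul_one, comp_def] using hg.comp (lipschitzWith_ciSup_sub c)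

variable {c ψ₀ : ι → ℝ} {i₀ : ι}

theorem ciSup_sub_eq_of_forall_lt (h : ∀ j ≠ i₀, ψ₀ j - c j < ψ₀ i₀ - c i₀) :
    ⨆ i, (ψ₀ i - c i) = ψ₀ i₀ - c i₀ := by
  have : Nonempty ι := ⟨i₀⟩
  have hle : ∀ j, ψ₀ j - c j ≤ ψ₀ i₀ - c i₀ := fun j => by
    rcases eq_or_ne j i₀ with rfl | hj
    exacts [le_rfl, (h j hj).le]
  exact le_antisymm (ciSup_le hle)
    (le_ciSup (f := fun j => ψ₀ j - c j) (finite_range _).bddAbove i₀)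

theorem eventually_forall_sub_lt (h : ∀ j ≠ i₀, ψ₀ j - c j < ψ₀ i₀ - c i₀) :
    ∀ᶠ ψ in 𝓝 ψ₀, ∀ j ≠ i₀, ψ j - c j < ψ i₀ - c i₀ := by
  refine eventually_all.2 fun j => ?_
  by_cases hj : j = i₀
  · exact Eventually.of_forall fun _ h => absurd hj h
  · have hcont : ∀ k, Continuous fun ψ : ι → ℝ => ψ k - c k := fun k => by fun_prop
    exact ((hcont j).tendsto ψ₀).eventually_lt ((hcont i₀).tendsto ψ₀) (h j hj) |>.mono
      fun _ h _ => h

theorem hasFDerivAt_ciSup_sub (h : ∀ j ≠ i₀, ψ₀ j - c j < ψ₀ i₀ - c i₀) :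
    HasFDerivAt (fun ψ : ι → ℝ => ⨆ i, (ψ i - c i))
      (ContinuousLinearMap.proj i₀ : (ι → ℝ) →L[ℝ] ℝ) ψ₀ := by
  refine ((hasFDerivAt_apply (𝕜 := ℝ) i₀ ψ₀).sub_const (c i₀)).congr_of_eventuallyEq ?_
  filter_upwards [eventually_forall_sub_lt h] with ψ hψ
  exact ciSup_sub_eq_of_forall_lt hψ

end FiniteSup

section Laguerre

variable {N : ℕ} {y ψ : Fin N → ℝ} {x : ℝ} {i i₀ : Fin N}

theorem mem_Lag1_iff : x ∈ Lag1 y ψ i ↔ ∀ j, ψ j - (x - y j) ^ 2 ≤ ψ i - (x - y i) ^ 2 :=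
  forall_congr' fun j => by constructor <;> intro h <;> linarith

theorem isClosed_Lag1 : IsClosed (Lag1 y ψ i) := by
  simp only [Lag1, ofPred_forall]
  exact isClosed_iInter fun j => isClosed_le (by fun_prop) (by fun_prop)

theorem mem_Lag1_iff_eq (h : ∀ j ≠ i₀, ψ j - (x - y j) ^ 2 < ψ i₀ - (x - y i₀) ^ 2) :
    x ∈ Lag1 y ψ i ↔ i = i₀ := by
  rw [mem_Lag1_iff]
  constructor
  · intro hi
    by_contra hne
    exact (h i hne).not_ge (hi i₀)
  · rintro rfl j
    rcases eq_or_ne j i with rfl | hj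
    exacts [le_rfl, (h j hj).le]

theorem ae_injective_sub_sq (hy : Injective y) (ψ : Fin N → ℝ) :
    ∀ᵐ x, Injective fun i => ψ i - (x - y i) ^ 2 := by
  have hties : ∀ i j, ∀ᵐ x, i ≠ j → ψ i - (x - y i) ^ 2 ≠ ψ j - (x - y j) ^ 2 := by
    intro i j
    by_cases hij : i = j
    · exact Eventually.of_forall fun _ h => absurd hij h
    -- the two parabolas differ by an affine function of `x` of slope `2 (y i - y j) ≠ 0`
    have hsub : {x | ψ i - (x - y i) ^ 2 = ψ j - (x - y j) ^ 2}.Subsingleton := by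
      intro a (ha : _ = _) b (hb : _ = _)
      have hab : (a - b) * (y i - y j) = 0 := by linear_combination (ha - hb) / 2
      exact sub_eq_zero.1 ((mul_eq_zero.1 hab).resolve_right (sub_ne_zero.2 (hy.ne hij)))
    exact (measure_eq_zero_iff_ae_notMem.1 (hsub.measure_zero _)).mono fun _ h _ => h
  filter_upwards [ae_all_iff.2 fun i => ae_all_iff.2 (hties i)] with x hx i j hval
  by_contra hij
  exact hx i j hij hval

end Laguerre

section DualFunctional

variable {N : ℕ} [Nonempty (Fin N)] {y : Fin N → ℝ} {g f : ℝ → ℝ}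

theorem integrable_comp_ciSup_mul (hf : Integrable f) (hg : LipschitzWith 1 g)
    (hg0 : ∀ t ≤ 0, g t = 0) (ψ : Fin N → ℝ) :
    Integrable fun x => g (⨆ i, (ψ i - (x - y i) ^ 2)) * f x := by
  refine hf.bdd_mul (c := ‖ψ‖)
    (hg.continuous.measurable.comp (Measurable.iSup fun i => by fun_prop)).aestronglyMeasurable
    (Eventually.of_forall fun x => ?_)
  have h0 : g (⨆ i, ((0 : Fin N → ℝ) i - (x - y i) ^ 2)) = 0 :=
    hg0 _ (ciSup_le fun i => by simp only [Pi.zero_apply, zero_sub, neg_nonpos]; positivity)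
  calc ‖g (⨆ i, (ψ i - (x - y i) ^ 2))‖
      = dist (g (⨆ i, (ψ i - (x - y i) ^ 2))) (g (⨆ i, ((0 : Fin N → ℝ) i - (x - y i) ^ 2))) := by
        rw [h0, dist_zero_right]
    _ ≤ 1 * dist ψ 0 := (lipschitzWith_comp_ciSup_sub hg fun i => (x - y i) ^ 2).dist_le_mul ψ 0
    _ = ‖ψ‖ := by rw [one_mul, dist_zero_right]

theorem concaveOn_Kg (α : Fin N → ℝ) (hf0 : ∀ x, 0 ≤ f x) (hf : Integrable f)
    (hgconv : ConvexOn ℝ univ g) (hgmono : Monotone g) (hglip : LipschitzWith 1 g)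
    (hg0 : ∀ t ≤ 0, g t = 0) : ConcaveOn ℝ univ (Kg y α g f) := by
  have hconv : ConvexOn ℝ univ fun ψ : Fin N → ℝ => ∫ x, g (⨆ i, (ψ i - (x - y i) ^ 2)) * f x :=
    convexOn_integral convex_univ
      (Eventually.of_forall fun x =>
        ((hgconv.comp_of_monotone hgmono (convexOn_ciSup_sub _)).smul (hf0 x)).congr
          fun _ _ => (smul_eq_mul _ _).trans (mul_comm _ _))
      fun ψ _ => integrable_comp_ciSup_mul hf hglip hg0 ψ
  have hlin : ConcaveOn ℝ univ fun ψ : Fin N → ℝ => ∑ i, α i * ψ i :=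
    ((∑ i, α i • LinearMap.proj (R := ℝ) (φ := fun _ : Fin N => ℝ) i).concaveOn
      convex_univ).congr fun ψ _ => by simp
  exact hconv.neg.add hlin

theorem hasFDerivAt_comp_ciSup_mul (hg : Differentiable ℝ g) {ψ₀ : Fin N → ℝ} {x : ℝ}
    (hx : Injective fun i => ψ₀ i - (x - y i) ^ 2) :
    HasFDerivAt (fun ψ : Fin N → ℝ => g (⨆ i, (ψ i - (x - y i) ^ 2)) * f x)
      (∑ i, (Lag1 y ψ₀ i).indicator (fun x => deriv g (ψ₀ i - (x - y i) ^ 2) * f x) x •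
        (ContinuousLinearMap.proj i : (Fin N → ℝ) →L[ℝ] ℝ)) ψ₀ := by
  obtain ⟨i₀, hi₀⟩ := exists_forall_lt_of_injective hx
  rw [Finset.sum_eq_single_of_mem i₀ (Finset.mem_univ _) fun j _ hj => by
    rw [indicator_of_notMem (mt (mem_Lag1_iff_eq hi₀).1 hj), zero_smul],
    indicator_of_mem ((mem_Lag1_iff_eq hi₀).2 rfl)]
  have hcomp := ((hg _).hasDerivAt.comp_hasFDerivAt ψ₀
    (hasFDerivAt_ciSup_sub (c := fun i => (x - y i) ^ 2) hi₀)).mul_const (f x)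
  rwa [ciSup_sub_eq_of_forall_lt hi₀, smul_smul, mul_comm] at hcomp

theorem hasFDerivAt_integral_comp_ciSup_mul (hf : Integrable f) (hgd : Differentiable ℝ g)
    (hglip : LipschitzWith 1 g) (hg0 : ∀ t ≤ 0, g t = 0) (hy : Injective y) (ψ₀ : Fin N → ℝ) :
    HasFDerivAt (fun ψ : Fin N → ℝ => ∫ x, g (⨆ i, (ψ i - (x - y i) ^ 2)) * f x)
      (∑ i, Gg y g f ψ₀ i • (ContinuousLinearMap.proj i : (Fin N → ℝ) →L[ℝ] ℝ)) ψ₀ := by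
  have hGint : ∀ i, Integrable
      ((Lag1 y ψ₀ i).indicator fun x => deriv g (ψ₀ i - (x - y i) ^ 2) * f x) := fun i =>
    (hf.bdd_mul (c := 1) ((measurable_deriv g).comp (by fun_prop)).aestronglyMeasurable
      (Eventually.of_forall fun _ => norm_deriv_le_of_lipschitz hglip)).indicator
      isClosed_Lag1.measurableSet
  have hlip : ∀ᵐ x, ∀ ψ ∈ univ, ‖g (⨆ i, (ψ i - (x - y i) ^ 2)) * f x
      - g (⨆ i, (ψ₀ i - (x - y i) ^ 2)) * f x‖ ≤ ‖f x‖ * ‖ψ - ψ₀‖ :=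
    Eventually.of_forall fun x ψ _ => by
      rw [← sub_mul, norm_mul, mul_comm, ← dist_eq_norm, ← dist_eq_norm]
      gcongr
      simpa using (lipschitzWith_comp_ciSup_sub hglip fun i => (x - y i) ^ 2).dist_le_mul ψ ψ₀
  have hint := (hasFDerivAt_integral_of_dominated_loc_of_lip' univ_mem
    (fun ψ _ => (integrable_comp_ciSup_mul hf hglip hg0 ψ).aestronglyMeasurable)
    (integrable_comp_ciSup_mul hf hglip hg0 ψ₀)
    (Finset.aestronglyMeasurable_fun_sum _ fun i _ => (hGint i).aestronglyMeasurable.smul_const _)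
    hlip hf.norm ((ae_injective_sub_sq hy ψ₀).mono fun x hx => hasFDerivAt_comp_ciSup_mul hgd hx)).2
  rwa [integral_finsetSum _ fun i _ => (hGint i).smul_const _, Finset.sum_congr rfl fun i _ => by
    rw [integral_smul_const, integral_indicator isClosed_Lag1.measurableSet, ← Gg]] at hint

theorem hasFDerivAt_Kg (α : Fin N → ℝ) (hf : Integrable f) (hgd : Differentiable ℝ g)
    (hglip : LipschitzWith 1 g) (hg0 : ∀ t ≤ 0, g t = 0) (hy : Injective y) (ψ₀ : Fin N → ℝ) :
    HasFDerivAt (Kg y α g f)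
      (∑ i, (α i - Gg y g f ψ₀ i) • (ContinuousLinearMap.proj i : (Fin N → ℝ) →L[ℝ] ℝ)) ψ₀ := by
  have hlin : HasFDerivAt (fun ψ : Fin N → ℝ => ∑ i, α i * ψ i)
      (∑ i, α i • (ContinuousLinearMap.proj i : (Fin N → ℝ) →L[ℝ] ℝ)) ψ₀ :=
    HasFDerivAt.fun_sum fun i _ => (hasFDerivAt_apply i ψ₀).const_mul (α i)
  refine ((hasFDerivAt_integral_comp_ciSup_mul hf hgd hglip hg0 hy ψ₀).neg.add hlin).congr_fderiv ?_
  rw [← Finset.sum_neg_distrib, ← Finset.sum_add_distrib]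
  exact Finset.sum_congr rfl fun i _ => by
    rw [sub_smul (α i) _ (ContinuousLinearMap.proj i : (Fin N → ℝ) →L[ℝ] ℝ), neg_add_eq_sub]

theorem continuous_Gg (hf : Integrable f) (hg' : Continuous (deriv g))
    (hbd : ∀ t, ‖deriv g t‖ ≤ 1) (hy : Injective y) (i : Fin N) :
    Continuous fun ψ => Gg y g f ψ i := by
  refine continuous_iff_continuousAt.2 fun ψ₀ => ?_
  have hGg : ∀ ψ, Gg y g f ψ i =
      ∫ x, (Lag1 y ψ i).indicator (fun x => deriv g (ψ i - (x - y i) ^ 2) * f x) x :=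
    fun ψ => (integral_indicator isClosed_Lag1.measurableSet).symm
  rw [ContinuousAt, hGg ψ₀]
  refine Tendsto.congr (fun ψ => (hGg ψ).symm) <|
    tendsto_integral_filter_of_dominated_convergence (fun x => ‖f x‖)
    (Eventually.of_forall fun ψ => ((hg'.measurable.comp (by fun_prop)).aestronglyMeasurable.mul
      hf.aestronglyMeasurable).indicator isClosed_Lag1.measurableSet)
    (Eventually.of_forall fun ψ => Eventually.of_forall fun x =>
      (norm_indicator_le_norm_self _ _).trans <| by
        rw [norm_mul]; exact mul_le_of_le_one_left (norm_nonneg _) (hbd _))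
    hf.norm ?_
  filter_upwards [ae_injective_sub_sq hy ψ₀] with x hx
  obtain ⟨i₀, hi₀⟩ := exists_forall_lt_of_injective hx
  -- near `ψ₀` the cell containing `x` stays `Lag1 y ψ i₀`
  have hind : ∀ ψ : Fin N → ℝ, (∀ j ≠ i₀, ψ j - (x - y j) ^ 2 < ψ i₀ - (x - y i₀) ^ 2) →
      (Lag1 y ψ i).indicator (fun x => deriv g (ψ i - (x - y i) ^ 2) * f x) x =
        if i = i₀ then deriv g (ψ i - (x - y i) ^ 2) * f x else 0 := fun ψ hψ => by
    split_ifs with h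
    exacts [indicator_of_mem ((mem_Lag1_iff_eq hψ).2 h) _,
      indicator_of_notMem (mt (mem_Lag1_iff_eq hψ).1 h) _]
  rw [hind ψ₀ hi₀]
  refine Tendsto.congr' ((eventually_forall_sub_lt hi₀).mono fun ψ hψ => (hind ψ hψ).symm) ?_
  split_ifs
  · exact ((hg'.comp (by fun_prop)).mul continuous_const).tendsto ψ₀
  · exact tendsto_const_nhds

end DualFunctional

theorem stmt8_general {N : ℕ} (hN : 0 < N)
    (f : ℝ → ℝ) (hf0 : ∀ x, 0 ≤ f x)
    (hfi : ∫ x, f x = 1)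
    (g : ℝ → ℝ) (hgconv : ConvexOn ℝ Set.univ g) (hgmono : Monotone g)
    (hgC1 : ContDiff ℝ 1 g) (hg0 : ∀ t ≤ (0 : ℝ), g t = 0)
    (hg' : ∀ t : ℝ, 0 ≤ deriv g t ∧ deriv g t ≤ 1)
    (y : Fin N → ℝ) (hy : StrictMono y)
    (α : Fin N → ℝ) :
    ConcaveOn ℝ Set.univ (Kg y α g f) ∧
    (∀ ψ : Fin N → ℝ,
      HasFDerivAt (Kg y α g f)
        (∑ i, ((α i - Gg y g f ψ i) •
          (ContinuousLinearMap.proj i : (Fin N → ℝ) →L[ℝ] ℝ))) ψ) ∧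
    Continuous (fun ψ : Fin N → ℝ => fun i => Gg y g f ψ i) := by
  have : Nonempty (Fin N) := ⟨⟨0, hN⟩⟩
  have hf : Integrable f := .of_integral_ne_zero (by rw [hfi]; exact one_ne_zero)
  have hgd : Differentiable ℝ g := hgC1.differentiable one_ne_zero
  have hbd : ∀ t, ‖deriv g t‖ ≤ 1 := fun t => abs_le.2 ⟨by linarith [(hg' t).1], (hg' t).2⟩
  have hglip : LipschitzWith 1 g := lipschitzWith_of_nnnorm_deriv_le hgd fun t => by
    exact_mod_cast hbd t
  exact ⟨concaveOn_Kg α hf0 hf hgconv hgmono hglip hg0,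
    hasFDerivAt_Kg α hf hgd hglip hg0 hy.injective,
    continuous_pi (continuous_Gg hf (hgC1.continuous_deriv le_rfl) hbd hy.injective)⟩

/-- the regularized dual functional `K^g` is concave on `ℝ^N` and
continuously differentiable, with `∂K^g/∂ψ_i (ψ) = α_i − G^g_i(ψ)`. -/
theorem stmt8 {N : ℕ} (hN : 0 < N)
    (f : ℝ → ℝ) (hfm : Measurable f) (hf0 : ∀ x, 0 ≤ f x)
    (hfc : HasCompactSupport f) (hfi : ∫ x, f x = 1)
    (g : ℝ → ℝ) (hgconv : ConvexOn ℝ Set.univ g) (hgmono : Monotone g)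
    (hgC1 : ContDiff ℝ 1 g) (hg0 : ∀ t ≤ (0 : ℝ), g t = 0)
    (hg' : ∀ t : ℝ, 0 ≤ deriv g t ∧ deriv g t ≤ 1)
    (y : Fin N → ℝ) (hy : StrictMono y)
    (α : Fin N → ℝ) (hα : ∀ i, 0 < α i) (hαs : ∑ i, α i < 1) :
    ConcaveOn ℝ Set.univ (Kg y α g f) ∧
    (∀ ψ : Fin N → ℝ,
      HasFDerivAt (Kg y α g f)
        (∑ i, ((α i - Gg y g f ψ i) •
          (ContinuousLinearMap.proj i : (Fin N → ℝ) →L[ℝ] ℝ))) ψ) ∧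
    Continuous (fun ψ : Fin N → ℝ => fun i => Gg y g f ψ i) :=
  stmt8_general hN f hf0 hfi g hgconv hgmono hgC1 hg0 hg' y hy α
end
end

section
/- Let ρ be a compactly supported absolutely continuous probability measure on ℝ. If ε_n → 0⁺ and ψⁿ → ψ in ℝ^N, then for every i ∈ {1,…,N}, the regularized mass G^{ε_n}_i(ψⁿ) = ∫_{Lag_i(ψⁿ)} min(√(max(ψⁿ_i − (x−y_i)², 0))/ε_n, 1) ρ(x) dx converges to ρ(Lag_i(ψ) ∩ {x : (x−y_i)² ≤ ψ_i}), the ρ-mass of the i-th restricted Laguerre cell of ψ. -/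
open MeasureTheory Real Filter Set Topology

noncomputable section

/-- The regularized mass of the `i`-th Laguerre cell,
`G^ε_i(ψ) = ∫_{Lag_i(ψ)} min(√(max(ψ_i − (x−y_i)², 0))/ε, 1) ρ(x) dx`. -/
def Greg {N : ℕ} (y : Fin N → ℝ) (f : ℝ → ℝ) (ε : ℝ) (ψ : Fin N → ℝ) (i : Fin N) : ℝ :=
  ∫ x in Lag1 y ψ i, min (Real.sqrt (max (ψ i - (x - y i) ^ 2) 0) / ε) 1 * f x

/-!
For almost every `x` the weight `(f*_εₙ)'(ψⁿ_i − (x − y_i)²) · 1_{Lag_i(ψⁿ)}(x)` is eventually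
constant: off the finitely many points where `(x − y_i)² = ψ_i` or where two cells of `ψ` meet,
membership in the Laguerre cell is stable under small perturbations of `ψ`, and the cutoff is
eventually `1` inside the ball `(x − y_i)² < ψ_i` (since `εₙ → 0`) and `0` outside it.
Dominated convergence, with `|f|` as dominating function, then gives the limit.
-/

/-- The paper's `(f*_ε)'`. -/
def regCutoff (ε t : ℝ) : ℝ := min (√(max t 0) / ε) 1

lemma regCutoff_nonneg {ε : ℝ} (hε : 0 ≤ ε) (t : ℝ) : 0 ≤ regCutoff ε t :=
  le_min (div_nonneg (sqrt_nonneg _) hε) zero_le_one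

lemma regCutoff_le_one (ε t : ℝ) : regCutoff ε t ≤ 1 := min_le_right _ _

lemma regCutoff_of_nonpos (ε : ℝ) {t : ℝ} (ht : t ≤ 0) : regCutoff ε t = 0 := by
  simp [regCutoff, max_eq_right ht]

lemma eventually_regCutoff_eq_one {α : Type*} {l : Filter α} {ε t : α → ℝ} {t₀ : ℝ}
    (hε : Tendsto ε l (𝓝[>] 0)) (ht : Tendsto t l (𝓝 t₀)) (ht₀ : 0 < t₀) :
    ∀ᶠ a in l, regCutoff (ε a) (t a) = 1 := by
  have hhalf : 0 < t₀ / 2 := half_pos ht₀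
  filter_upwards [ht.eventually (eventually_gt_nhds (half_lt_self ht₀)),
    hε (Ioo_mem_nhdsGT (sqrt_pos.2 hhalf))] with a hta ⟨hεa, hεlt⟩
  have : √(t₀ / 2) ≤ √(max (t a) 0) := sqrt_le_sqrt (le_max_of_le_left hta.le)
  exact min_eq_right ((one_le_div hεa).2 (hεlt.le.trans this))

def lagWeight {N : ℕ} (y : Fin N → ℝ) (ε : ℝ) (ψ : Fin N → ℝ) (i : Fin N) : ℝ → ℝ :=
  (Lag1 y ψ i).indicator fun x => regCutoff ε (ψ i - (x - y i) ^ 2)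

def restrictedLag {N : ℕ} (y ψ : Fin N → ℝ) (i : Fin N) : Set ℝ :=
  Lag1 y ψ i ∩ {x | (x - y i) ^ 2 ≤ ψ i}

lemma setOf_sub_sq_eq_finite (a c : ℝ) : {x : ℝ | (x - a) ^ 2 = c}.Finite := by
  refine (toFinite {a + √c, a - √c}).subset fun x hx => ?_
  have hc : (x - a) ^ 2 = √c ^ 2 := by rw [hx, sq_sqrt (hx ▸ sq_nonneg _)]
  rcases sq_eq_sq_iff_eq_or_eq_neg.1 hc with h | h
  · exact .inl (by linarith)
  · exact .inr (mem_singleton_iff.2 (by linarith))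

/-- The two sides differ by an affine function of `x` with slope `2 (b - a) ≠ 0`. -/
lemma setOf_sub_sq_sub_eq_subsingleton {a b : ℝ} (hab : a ≠ b) (s t : ℝ) :
    {x : ℝ | (x - a) ^ 2 - s = (x - b) ^ 2 - t}.Subsingleton := by
  intro u (hu : (u - a) ^ 2 - s = (u - b) ^ 2 - t) v (hv : (v - a) ^ 2 - s = (v - b) ^ 2 - t)
  have hslope : 2 * (b - a) ≠ 0 := mul_ne_zero two_ne_zero (sub_ne_zero.2 hab.symm)
  exact mul_left_cancel₀ hslope (by linear_combination hu - hv)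

section Laguerre

variable {α : Type*} {l : Filter α} {N : ℕ} {y : Fin N → ℝ} {i : Fin N}

lemma measurableSet_lag1 (y ψ : Fin N → ℝ) (i : Fin N) : MeasurableSet (Lag1 y ψ i) := by
  simp only [Lag1, ofPred_forall]
  exact .iInter fun j => measurableSet_le (by fun_prop) (by fun_prop)

lemma measurableSet_restrictedLag (y ψ : Fin N → ℝ) (i : Fin N) :
    MeasurableSet (restrictedLag y ψ i) :=
  (measurableSet_lag1 y ψ i).inter (measurableSet_le (by fun_prop) measurable_const)

lemma measurable_lagWeight (y : Fin N → ℝ) (ε : ℝ) (ψ : Fin N → ℝ) (i : Fin N) :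
    Measurable (lagWeight y ε ψ i) :=
  (Measurable.min (by fun_prop) measurable_const).indicator (measurableSet_lag1 y ψ i)

lemma lagWeight_nonneg {ε : ℝ} (hε : 0 ≤ ε) (ψ : Fin N → ℝ) (x : ℝ) :
    0 ≤ lagWeight y ε ψ i x :=
  indicator_nonneg (fun _ _ => regCutoff_nonneg hε _) x

lemma lagWeight_le_one (ε : ℝ) (ψ : Fin N → ℝ) (x : ℝ) : lagWeight y ε ψ i x ≤ 1 :=
  indicator_apply_le' (fun _ => regCutoff_le_one _ _) fun _ => zero_le_one

lemma lagWeight_of_le {ε : ℝ} {ψ : Fin N → ℝ} {x : ℝ} (h : ψ i ≤ (x - y i) ^ 2) :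
    lagWeight y ε ψ i x = 0 :=
  indicator_apply_eq_zero.2 fun _ => regCutoff_of_nonpos ε (by linarith)

lemma eventually_mem_lag1 {ψn : α → Fin N → ℝ} {ψ : Fin N → ℝ}
    (hψ : Tendsto ψn l (𝓝 ψ)) {x : ℝ}
    (hx : ∀ j ≠ i, (x - y i) ^ 2 - ψ i < (x - y j) ^ 2 - ψ j) :
    ∀ᶠ a in l, x ∈ Lag1 y (ψn a) i := by
  refine eventually_all.2 fun j => ?_
  rcases eq_or_ne j i with rfl | hj
  · exact .of_forall fun _ => le_rfl
  · have hopen := isOpen_lt (f := fun ψ' : Fin N → ℝ => (x - y i) ^ 2 - ψ' i)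
      (g := fun ψ' => (x - y j) ^ 2 - ψ' j) (by fun_prop) (by fun_prop)
    exact (hψ.eventually (hopen.mem_nhds (hx j hj))).mono fun _ h => le_of_lt h

lemma eventually_notMem_lag1 {ψn : α → Fin N → ℝ}
    {ψ : Fin N → ℝ} (hψ : Tendsto ψn l (𝓝 ψ)) {x : ℝ} (hx : x ∉ Lag1 y ψ i) :
    ∀ᶠ a in l, x ∉ Lag1 y (ψn a) i := by
  simp only [Lag1, mem_ofPred_eq, not_forall, not_le] at hx ⊢
  obtain ⟨j, hj⟩ := hx
  have hopen := isOpen_lt (f := fun ψ' : Fin N → ℝ => (x - y j) ^ 2 - ψ' j)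
    (g := fun ψ' => (x - y i) ^ 2 - ψ' i) (by fun_prop) (by fun_prop)
  exact (hψ.eventually (hopen.mem_nhds hj)).mono fun _ h => ⟨j, h⟩

lemma tendsto_lagWeight {ε : α → ℝ} {ψn : α → Fin N → ℝ}
    {ψ : Fin N → ℝ} (hε : Tendsto ε l (𝓝[>] 0)) (hψ : Tendsto ψn l (𝓝 ψ)) {x : ℝ}
    (hsphere : (x - y i) ^ 2 ≠ ψ i)
    (hties : ∀ j ≠ i, (x - y i) ^ 2 - ψ i ≠ (x - y j) ^ 2 - ψ j) :
    Tendsto (fun a => lagWeight y (ε a) (ψn a) i x) l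
      (𝓝 ((restrictedLag y ψ i).indicator 1 x)) := by
  have hψi : Tendsto (fun a => ψn a i) l (𝓝 (ψ i)) := tendsto_pi_nhds.1 hψ i
  by_cases hxL : x ∈ Lag1 y ψ i
  · rcases hsphere.lt_or_gt with hin | hout
    · rw [indicator_of_mem (show x ∈ restrictedLag y ψ i from ⟨hxL, hin.le⟩), Pi.one_apply]
      refine tendsto_nhds_of_eventually_eq ?_
      have hstrict : ∀ j ≠ i, (x - y i) ^ 2 - ψ i < (x - y j) ^ 2 - ψ j :=
        fun j hj => (hxL j).lt_of_ne (hties j hj)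
      filter_upwards [eventually_mem_lag1 hψ hstrict,
        eventually_regCutoff_eq_one hε (hψi.sub_const _) (sub_pos.2 hin)] with a hmem hone
      rw [lagWeight, indicator_of_mem hmem, hone]
    · rw [indicator_of_notMem fun h => hout.not_ge h.2]
      refine tendsto_nhds_of_eventually_eq ?_
      filter_upwards [hψi.eventually (eventually_lt_nhds hout)] with a ha
      exact lagWeight_of_le ha.le
  · rw [indicator_of_notMem fun h => hxL h.1]
    refine tendsto_nhds_of_eventually_eq ?_
    filter_upwards [eventually_notMem_lag1 hψ hxL] with a ha
    exact indicator_of_notMem ha _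

lemma ae_off_sphere_and_cell_boundaries (hy : Function.Injective y) (ψ : Fin N → ℝ)
    (i : Fin N) (μ : Measure ℝ) [NullSingletonClass μ] :
    ∀ᵐ x ∂μ, (x - y i) ^ 2 ≠ ψ i ∧ ∀ j ≠ i, (x - y i) ^ 2 - ψ i ≠ (x - y j) ^ 2 - ψ j := by
  refine (setOf_sub_sq_eq_finite (y i) (ψ i)).countable.ae_notMem μ |>.and ?_
  refine ae_all_iff.2 fun j => ?_
  rcases eq_or_ne j i with rfl | hj
  · exact .of_forall fun _ h => absurd rfl h
  · have hties := setOf_sub_sq_sub_eq_subsingleton (hy.ne hj.symm) (ψ i) (ψ j)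
    filter_upwards [hties.countable.ae_notMem μ] with x hx _ using hx

lemma tendsto_integral_lagWeight_mul [l.IsCountablyGenerated] (hy : Function.Injective y)
    {f : ℝ → ℝ} {μ : Measure ℝ} [NullSingletonClass μ] (hf : Integrable f μ)
    {ε : α → ℝ} (hε : Tendsto ε l (𝓝[>] 0))
    {ψn : α → Fin N → ℝ} {ψ : Fin N → ℝ} (hψ : Tendsto ψn l (𝓝 ψ)) (i : Fin N) :
    Tendsto (fun a => ∫ x, lagWeight y (ε a) (ψn a) i x * f x ∂μ) l
      (𝓝 (∫ x, (restrictedLag y ψ i).indicator 1 x * f x ∂μ)) := by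
  refine tendsto_integral_filter_of_dominated_convergence (fun x => ‖f x‖)
    (.of_forall fun a => (measurable_lagWeight y _ _ i).aestronglyMeasurable.mul hf.1)
    ?_ hf.norm ?_
  · filter_upwards [hε self_mem_nhdsWithin] with a (hεa : 0 < ε a)
    refine .of_forall fun x => ?_
    rw [norm_mul, Real.norm_of_nonneg (lagWeight_nonneg hεa.le _ x)]
    exact mul_le_of_le_one_left (norm_nonneg _) (lagWeight_le_one _ _ x)
  · filter_upwards [ae_off_sphere_and_cell_boundaries hy ψ i μ] with x hx
    exact (tendsto_lagWeight hε hψ hx.1 hx.2).mul_const _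

end Laguerre

lemma greg_eq_integral_lagWeight_mul {N : ℕ} (y : Fin N → ℝ) (f : ℝ → ℝ) (ε : ℝ)
    (ψ : Fin N → ℝ) (i : Fin N) : Greg y f ε ψ i = ∫ x, lagWeight y ε ψ i x * f x := by
  simp_rw [lagWeight, ← indicator_mul_left]
  exact (integral_indicator (measurableSet_lag1 y ψ i)).symm

lemma setIntegral_restrictedLag_eq {N : ℕ} (y ψ : Fin N → ℝ) (i : Fin N) (f : ℝ → ℝ) :
    ∫ x in restrictedLag y ψ i, f x = ∫ x, (restrictedLag y ψ i).indicator 1 x * f x := by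
  simp_rw [← indicator_mul_left, Pi.one_apply, one_mul]
  exact (integral_indicator (measurableSet_restrictedLag y ψ i)).symm

theorem stmt10_general {N : ℕ}
    (f : ℝ → ℝ) (hfi : ∫ x, f x = 1)
    (y : Fin N → ℝ) (hy : StrictMono y)
    (ε : ℕ → ℝ) (hε : ∀ n, 0 < ε n) (hε0 : Filter.Tendsto ε Filter.atTop (nhds 0))
    (ψn : ℕ → Fin N → ℝ) (ψ : Fin N → ℝ)
    (hψ : Filter.Tendsto ψn Filter.atTop (nhds ψ)) :
    ∀ i : Fin N,
      Filter.Tendsto (fun n => Greg y f (ε n) (ψn n) i) Filter.atTop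
        (nhds (∫ x in Lag1 y ψ i ∩ {x : ℝ | (x - y i) ^ 2 ≤ ψ i}, f x)) := by
  intro i
  have hf : Integrable f := .of_integral_ne_zero (hfi ▸ one_ne_zero)
  have hε' : Tendsto ε atTop (𝓝[>] 0) := tendsto_nhdsWithin_iff.2 ⟨hε0, .of_forall hε⟩
  simp_rw [greg_eq_integral_lagWeight_mul]
  rw [← restrictedLag, setIntegral_restrictedLag_eq]
  exact tendsto_integral_lagWeight_mul hy.injective hf hε' hψ i

/-- if `ε_n → 0⁺` and `ψⁿ → ψ`, then the regularized masses
`G^{ε_n}_i(ψⁿ)` converge to the `ρ`-mass of the `i`-th restricted Laguerre cell of `ψ`. -/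
theorem stmt10 {N : ℕ} (hN : 0 < N)
    (f : ℝ → ℝ) (hfm : Measurable f) (hf0 : ∀ x, 0 ≤ f x)
    (hfc : HasCompactSupport f) (hfi : ∫ x, f x = 1)
    (y : Fin N → ℝ) (hy : StrictMono y)
    (ε : ℕ → ℝ) (hε : ∀ n, 0 < ε n) (hε0 : Filter.Tendsto ε Filter.atTop (nhds 0))
    (ψn : ℕ → Fin N → ℝ) (ψ : Fin N → ℝ)
    (hψ : Filter.Tendsto ψn Filter.atTop (nhds ψ)) :
    ∀ i : Fin N,
      Filter.Tendsto (fun n => Greg y f (ε n) (ψn n) i) Filter.atTop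
        (nhds (∫ x in Lag1 y ψ i ∩ {x : ℝ | (x - y i) ^ 2 ≤ ψ i}, f x)) :=
  stmt10_general f hfi y hy ε hε hε0 ψn ψ hψ
end
end

section
/- For every ε with 0 < ε < ε₀ := min(1, α_min/(2ρ_max)) and every maximizer ψ of K^ε, the map e ↦ G^e_i(ψ) (with ψ fixed) is differentiable at e = ε for each i ∈ {1,…,N}, and the vector q ∈ ℝ^N with components q_i = −(d/de) G^e_i(ψ)|_{e=ε} satisfies ‖q‖ ≤ (4 ρ_max²/α_min) √N · ε. -/
open MeasureTheory Real Filter Set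

noncomputable section

/-- The convex conjugate `f*` of the regularizing function `f(t) = t³/3` on `[0,1]`. -/
def fstar (t : ℝ) : ℝ :=
  if t ≤ 0 then 0 else if t ≤ 1 then (2 / 3) * t ^ ((3 : ℝ) / 2) else t - 1 / 3

/-- The rescaled conjugate `f*_ε(t) = ε² f*(t/ε²)`. -/
def fstarE (ε t : ℝ) : ℝ := ε ^ 2 * fstar (t / ε ^ 2)

/-- The regularized dual functional `K^ε`. -/
def Kreg {N : ℕ} (y α : Fin N → ℝ) (f : ℝ → ℝ) (ε : ℝ) (ψ : Fin N → ℝ) : ℝ :=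
  -(∫ x, fstarE ε (⨆ i, (ψ i - (x - y i) ^ 2)) * f x) + ∑ i, α i * ψ i

/-!
Raising `ψ_i` by `t > 0` increases `Σ_j α_j ψ_j` by `α_i t`, while it increases the integrand
`f*_ε(max_j (ψ_j - (x - y_j)²))` by at most `t` (as `f*_ε` is 1-Lipschitz and vanishes on
`(-∞, 0]`), and only where `(x - y_i)² < ψ_i + t`, a set of length `2√(ψ_i + t)`. At a maximizer
this forces `α_i ≤ 2 ρ_max √(ψ_i + t)`, hence `√ψ_i ≥ α_min / (2ρ_max) > ε`.

With `s(x) = √((ψ_i - (x - y_i)²)₊)`, the integrand of `G^e_i(ψ)` is `min(s/e, 1) ρ`, which is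
Lipschitz in `e` near `ε` and differentiable at `ε` off the null set `{s = ε}`; so
`∂_e G^e_i(ψ)|_{e=ε} = -∫_{Lag_i, s < ε} s ρ / ε²`. Its integrand is at most `ρ_max / ε` and is
supported in the annulus `ψ_i - ε² ≤ (x - y_i)² < ψ_i`, of length
`2(√ψ_i - √(ψ_i - ε²)) ≤ 2ε² / √ψ_i ≤ 4 ρ_max ε² / α_min`.
-/

open Topology Metric

lemma fstar_of_nonpos {t : ℝ} (ht : t ≤ 0) : fstar t = 0 := if_pos ht

lemma fstar_max_zero (t : ℝ) : fstar (max t 0) = fstar t := by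
  rcases le_total t 0 with ht | ht
  · rw [max_eq_right ht, fstar_of_nonpos le_rfl, fstar_of_nonpos ht]
  · rw [max_eq_left ht]

lemma fstar_of_nonneg {t : ℝ} (ht : 0 ≤ t) :
    fstar t = if t ≤ 1 then 2 / 3 * √t ^ 3 else t - 1 / 3 := by
  rcases ht.eq_or_lt with rfl | ht
  · simp [fstar]
  rw [fstar, if_neg ht.not_ge, sqrt_eq_rpow, ← rpow_natCast, ← rpow_mul ht.le]
  norm_num

lemma fstar_le_and_sub_le_of_nonneg {a b : ℝ} (ha : 0 ≤ a) (hab : a ≤ b) :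
    fstar a ≤ fstar b ∧ fstar b - fstar a ≤ b - a := by
  have hb := ha.trans hab
  rw [fstar_of_nonneg ha, fstar_of_nonneg hb]
  obtain ⟨s, hs, rfl⟩ : ∃ s, 0 ≤ s ∧ s ^ 2 = a := ⟨√a, sqrt_nonneg a, sq_sqrt ha⟩
  obtain ⟨r, hr, rfl⟩ : ∃ r, 0 ≤ r ∧ r ^ 2 = b := ⟨√b, sqrt_nonneg b, sq_sqrt hb⟩
  have hsr : s ≤ r := (pow_le_pow_iff_left₀ hs hr two_ne_zero).1 hab
  rw [sqrt_sq hs, sqrt_sq hr]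
  split_ifs with ha1 hb1 hb1
  · have hr1 : r ≤ 1 := by nlinarith
    have hrs : 0 ≤ r - s := by linarith
    constructor
    · nlinarith [pow_le_pow_left₀ hs hsr 3]
    · nlinarith [mul_nonneg hrs (mul_nonneg hs (sub_nonneg.2 hr1)),
        mul_nonneg hrs (mul_nonneg hr (sub_nonneg.2 hr1)),
        mul_nonneg hrs (mul_nonneg hs (sub_nonneg.2 (hsr.trans hr1))),
        mul_nonneg hrs (mul_nonneg hr (sub_nonneg.2 (hsr.trans hr1)))]
  · have hs1 : s ≤ 1 := by nlinarith
    constructor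
    · nlinarith [pow_le_one₀ (n := 3) hs hs1]
    · nlinarith [mul_nonneg (sq_nonneg (s - 1)) hs]
  · exact absurd (hab.trans hb1) ha1
  · constructor <;> linarith

lemma fstar_le_and_sub_le {a b : ℝ} (hab : a ≤ b) :
    fstar a ≤ fstar b ∧ fstar b - fstar a ≤ max b 0 - max a 0 := by
  rw [← fstar_max_zero a, ← fstar_max_zero b]
  exact fstar_le_and_sub_le_of_nonneg (le_max_right a 0) (max_le_max_right 0 hab)

lemma lipschitzWith_one_fstar : LipschitzWith 1 fstar := by
  refine LipschitzWith.of_dist_le_mul fun a b => ?_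
  simp only [dist_eq, NNReal.coe_one, one_mul]
  wlog hab : a ≤ b generalizing a b
  · rw [abs_sub_comm, abs_sub_comm a]
    exact this b a (le_of_not_ge hab)
  obtain ⟨hmono, hlip⟩ := fstar_le_and_sub_le hab
  rw [abs_sub_comm, abs_of_nonneg (sub_nonneg.2 hmono), abs_sub_comm,
    abs_of_nonneg (sub_nonneg.2 hab)]
  have : max b 0 - max a 0 ≤ b - a := by
    simpa [max_eq_left (sub_nonneg.2 hab)] using max_sub_max_le_max b 0 a 0
  linarith

lemma continuous_fstarE (ε : ℝ) : Continuous (fstarE ε) :=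
  continuous_const.mul (lipschitzWith_one_fstar.continuous.comp (continuous_id.div_const _))

lemma fstarE_sub_le {ε a b : ℝ} (hε : ε ≠ 0) (hab : a ≤ b) :
    fstarE ε b - fstarE ε a ≤ max b 0 - max a 0 := by
  have hε2 : 0 < ε ^ 2 := by positivity
  calc fstarE ε b - fstarE ε a = ε ^ 2 * (fstar (b / ε ^ 2) - fstar (a / ε ^ 2)) := by
        unfold fstarE; ring
    _ ≤ ε ^ 2 * (max (b / ε ^ 2) (0 / ε ^ 2) - max (a / ε ^ 2) (0 / ε ^ 2)) := by
        rw [zero_div]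
        exact mul_le_mul_of_nonneg_left
          (fstar_le_and_sub_le (div_le_div_of_nonneg_right hab hε2.le)).2 hε2.le
    _ = max b 0 - max a 0 := by
        rw [max_div_div_right hε2.le, max_div_div_right hε2.le]
        field_simp

lemma ciSup_add_single {ι : Type*} [Finite ι] [DecidableEq ι] (a : ι → ℝ) (i : ι) {t : ℝ}
    (ht : 0 ≤ t) : ⨆ j, (a j + (Pi.single i t : ι → ℝ) j) = max (a i + t) (⨆ j, a j) := by
  have : Nonempty ι := ⟨i⟩
  refine le_antisymm (ciSup_le fun j => ?_) (max_le ?_ ?_)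
  · rcases eq_or_ne j i with rfl | hj
    · simp
    · simpa [hj] using le_max_of_le_right (le_ciSup (Finite.bddAbove_range a) j)
  · simpa using le_ciSup (Finite.bddAbove_range fun j => a j + (Pi.single i t : ι → ℝ) j) i
  · refine ciSup_mono (Finite.bddAbove_range _) fun j => le_add_of_nonneg_right ?_
    rcases eq_or_ne j i with rfl | hj <;> simp [*]

lemma fstarE_ciSup_add_single_sub_le {ι : Type*} [Finite ι] [DecidableEq ι] {ε : ℝ}
    (hε : ε ≠ 0) (a : ι → ℝ) (i : ι) {t : ℝ} (ht : 0 ≤ t) :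
    fstarE ε (⨆ j, (a j + (Pi.single i t : ι → ℝ) j)) - fstarE ε (⨆ j, a j) ≤
      if 0 < a i + t then t else 0 := by
  set S := ⨆ j, a j
  have hai : a i ≤ S := le_ciSup (Finite.bddAbove_range a) i
  rw [ciSup_add_single a i ht]
  refine (fstarE_sub_le hε (le_max_right _ _)).trans ?_
  split_ifs with h
  · have hle : max (a i + t) S ≤ S + t := max_le (by linarith) (by linarith)
    calc max (max (a i + t) S) 0 - max S 0 ≤ max (max (a i + t) S - S) (0 - 0) :=
          max_sub_max_le_max _ _ _ _
      _ ≤ t := max_le (by linarith) (by linarith)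
  · rw [max_assoc, max_eq_right (le_max_of_le_right (not_lt.1 h)), sub_self]

lemma continuous_ciSup_of_finite {ι X : Type*} [Fintype ι] [Nonempty ι] [TopologicalSpace X]
    {g : ι → X → ℝ} (hg : ∀ j, Continuous (g j)) : Continuous fun x => ⨆ j, g j x := by
  simp_rw [← Finset.sup'_univ_eq_ciSup]
  exact Continuous.finset_sup'_apply _ fun j _ => hg j

lemma integrable_mul_of_isCompact {X : Type*} [TopologicalSpace X] [T2Space X]
    [MeasurableSpace X] [OpensMeasurableSpace X] {μ : Measure X} {K : Set X} {f G : X → ℝ}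
    (hK : IsCompact K) (hfK : IntegrableOn f K μ) (hsupp : ∀ x ∉ K, f x = 0)
    (hG : Continuous G) : Integrable (fun x => G x * f x) μ :=
  (hfK.continuousOn_mul hG.continuousOn hK).integrable_of_forall_notMem_eq_zero
    fun x hx => by simp [hsupp x hx]

section Maximizer

variable {N : ℕ} {y α ψ : Fin N → ℝ} {f : ℝ → ℝ} {ρmax ε : ℝ}

lemma mul_le_integral_sub_of_isMaxOn_Kreg
    (hint : ∀ φ : Fin N → ℝ, Integrable fun x => fstarE ε (⨆ j, (φ j - (x - y j) ^ 2)) * f x)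
    (hm : IsMaxOn (Kreg y α f ε) univ ψ) (i : Fin N) (t : ℝ) :
    α i * t ≤ ∫ x, (fstarE ε (⨆ j, ((ψ + Pi.single i t : Fin N → ℝ) j - (x - y j) ^ 2)) -
      fstarE ε (⨆ j, (ψ j - (x - y j) ^ 2))) * f x := by
  have hK : Kreg y α f ε (ψ + Pi.single i t) ≤ Kreg y α f ε ψ := hm (mem_univ _)
  have hsum : ∑ j, α j * (ψ + Pi.single i t : Fin N → ℝ) j = ∑ j, α j * ψ j + α i * t := by
    simp [mul_add, Finset.sum_add_distrib, Pi.single_apply]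
  simp only [Kreg, hsum] at hK
  simp_rw [sub_mul]
  rw [integral_sub (hint _) (hint _)]
  linarith

lemma integral_fstarE_add_single_sub_le (hf0 : ∀ x, 0 ≤ f x) (hf_le : ∀ x, f x ≤ ρmax)
    (hint : ∀ φ : Fin N → ℝ, Integrable fun x => fstarE ε (⨆ j, (φ j - (x - y j) ^ 2)) * f x)
    (hε : ε ≠ 0) (i : Fin N) {t : ℝ} (ht : 0 ≤ t) :
    ∫ x, (fstarE ε (⨆ j, ((ψ + Pi.single i t : Fin N → ℝ) j - (x - y j) ^ 2)) -
      fstarE ε (⨆ j, (ψ j - (x - y j) ^ 2))) * f x ≤ t * ρmax * (2 * √(ψ i + t)) := by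
  have hρ : 0 ≤ ρmax := (hf0 0).trans (hf_le 0)
  have hpt : ∀ x, (fstarE ε (⨆ j, ((ψ + Pi.single i t : Fin N → ℝ) j - (x - y j) ^ 2)) -
      fstarE ε (⨆ j, (ψ j - (x - y j) ^ 2))) * f x ≤
        (ball (y i) √(ψ i + t)).indicator (fun _ => t * ρmax) x := by
    intro x
    have h := fstarE_ciSup_add_single_sub_le hε (fun j => ψ j - (x - y j) ^ 2) i ht
    simp only [Pi.add_apply, add_sub_right_comm _ _ ((x - y _) ^ 2)]
    split_ifs at h with hpos
    · have hx : x ∈ ball (y i) √(ψ i + t) := by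
        rw [mem_ball, dist_eq, lt_sqrt (abs_nonneg _), sq_abs]
        linarith
      rw [indicator_of_mem hx]
      exact mul_le_mul h (hf_le x) (hf0 x) ht
    · exact (mul_nonpos_of_nonpos_of_nonneg h (hf0 x)).trans
        (indicator_nonneg (fun _ _ => mul_nonneg ht hρ) x)
  calc _ ≤ ∫ x, (ball (y i) √(ψ i + t)).indicator (fun _ => t * ρmax) x :=
        integral_mono (by simp_rw [sub_mul]; exact (hint _).sub (hint _))
          ((integrable_indicator_iff measurableSet_ball).2
            (integrableOn_const measure_ball_lt_top.ne)) hpt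
    _ = t * ρmax * (2 * √(ψ i + t)) := by
        rw [integral_indicator_const _ measurableSet_ball, volume_real_ball (sqrt_nonneg _),
          smul_eq_mul, mul_comm]

lemma div_le_sqrt_of_isMaxOn_Kreg {K : Set ℝ} (hK : IsCompact K) (hfK : IntegrableOn f K)
    (hsupp : ∀ x ∉ K, f x = 0) (hf0 : ∀ x, 0 ≤ f x) (hf_le : ∀ x, f x ≤ ρmax) (hε : ε ≠ 0)
    (hm : IsMaxOn (Kreg y α f ε) univ ψ) (i : Fin N) : α i / (2 * ρmax) ≤ √(ψ i) := by
  have : Nonempty (Fin N) := ⟨i⟩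
  have hρ : 0 ≤ ρmax := (hf0 0).trans (hf_le 0)
  have hint : ∀ φ : Fin N → ℝ, Integrable fun x => fstarE ε (⨆ j, (φ j - (x - y j) ^ 2)) * f x :=
    fun φ => integrable_mul_of_isCompact hK hfK hsupp
      ((continuous_fstarE ε).comp (continuous_ciSup_of_finite fun j => by fun_prop))
  have hle : ∀ t > 0, α i / (2 * ρmax) ≤ √(ψ i + t) := by
    intro t ht
    have h := (mul_le_integral_sub_of_isMaxOn_Kreg hint hm i t).trans
      (integral_fstarE_add_single_sub_le hf0 hf_le hint hε i ht.le)
    have hα : α i ≤ 2 * ρmax * √(ψ i + t) := le_of_mul_le_mul_right (by linarith) ht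
    rcases hρ.eq_or_lt with h0 | h0
    · simp [← h0]
    · rwa [div_le_iff₀ (by positivity), mul_comm]
  have hlim : Tendsto (fun t => √(ψ i + t)) (𝓝[>] 0) (𝓝 √(ψ i)) := by
    simpa using ((continuous_const.add continuous_id).sqrt.tendsto (0 : ℝ)).mono_left
      nhdsWithin_le_nhds
  exact ge_of_tendsto hlim (eventually_nhdsWithin_of_forall hle)

end Maximizer

lemma hasDerivAt_min_div_one {a ε : ℝ} (hε : 0 < ε) (ha : a ≠ ε) :
    HasDerivAt (fun t => min (a / t) 1) (if a < ε then -(a / ε ^ 2) else 0) ε := by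
  rcases ha.lt_or_gt with ha | ha
  · rw [if_pos ha]
    have h : HasDerivAt (fun t => a / t) (-(a / ε ^ 2)) ε := by
      simpa [div_eq_mul_inv] using (hasDerivAt_inv hε.ne').const_mul a
    refine h.congr_of_eventuallyEq ?_
    filter_upwards [lt_mem_nhds (max_lt ha hε)] with t ht
    obtain ⟨hat, ht0⟩ := max_lt_iff.1 ht
    exact min_eq_left ((div_le_one ht0).2 hat.le)
  · rw [if_neg ha.not_gt]
    refine (hasDerivAt_const ε (1 : ℝ)).congr_of_eventuallyEq ?_
    filter_upwards [Ioo_mem_nhds hε ha] with t ht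
    exact min_eq_right ((one_le_div ht.1).2 ht.2.le)

lemma abs_min_div_one_sub_le {a B r t₁ t₂ : ℝ} (ha : |a| ≤ B) (hr : 0 < r) (h₁ : r ≤ t₁)
    (h₂ : r ≤ t₂) : |min (a / t₁) 1 - min (a / t₂) 1| ≤ B / r ^ 2 * |t₁ - t₂| := by
  have ht₁ : 0 < t₁ := hr.trans_le h₁
  have ht₂ : 0 < t₂ := hr.trans_le h₂
  calc |min (a / t₁) 1 - min (a / t₂) 1| ≤ |a / t₁ - a / t₂| := by
        simpa using abs_min_sub_min_le_max (a / t₁) 1 (a / t₂) 1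
    _ = |a| * |t₁ - t₂| / (t₁ * t₂) := by
        rw [show a / t₁ - a / t₂ = a * (t₂ - t₁) / (t₁ * t₂) by field_simp, abs_div, abs_mul,
          abs_sub_comm t₂, abs_of_pos (mul_pos ht₁ ht₂)]
    _ ≤ B * |t₁ - t₂| / r ^ 2 :=
        div_le_div₀ (by positivity [(abs_nonneg a).trans ha])
          (mul_le_mul_of_nonneg_right ha (abs_nonneg _)) (by positivity) (by nlinarith)
    _ = B / r ^ 2 * |t₁ - t₂| := by ring

lemma hasDerivAt_integral_min_div_mul {X : Type*} [MeasurableSpace X] {μ : Measure X}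
    {s g : X → ℝ} {B ε : ℝ} (hs : Measurable s) (hs0 : ∀ x, 0 ≤ s x) (hsB : ∀ x, s x ≤ B)
    (hg : Integrable g μ) (hε : 0 < ε) (hne : ∀ᵐ x ∂μ, s x ≠ ε) :
    HasDerivAt (fun t => ∫ x, min (s x / t) 1 * g x ∂μ)
      (∫ x, (if s x < ε then -(s x / ε ^ 2) else 0) * g x ∂μ) ε := by
  have hmeas : ∀ t, AEStronglyMeasurable (fun x => min (s x / t) 1 * g x) μ := fun t =>
    ((hs.div_const t).min measurable_const).aestronglyMeasurable.mul hg.aestronglyMeasurable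
  have hlip : ∀ x, LipschitzOnWith (Real.nnabs (B / (ε / 2) ^ 2 * |g x|))
      (fun t => min (s x / t) 1 * g x) (ball ε (ε / 2)) := by
    intro x
    have hB : 0 ≤ B := (hs0 x).trans (hsB x)
    refine LipschitzOnWith.of_dist_le_mul fun t₁ ht₁ t₂ ht₂ => ?_
    rw [mem_ball, dist_eq, abs_sub_lt_iff] at ht₁ ht₂
    have h := abs_min_div_one_sub_le (a := s x) ((abs_of_nonneg (hs0 x)).trans_le (hsB x))
      (half_pos hε) (by linarith : ε / 2 ≤ t₁) (by linarith : ε / 2 ≤ t₂)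
    rw [dist_eq, dist_eq, ← sub_mul, abs_mul, Real.coe_nnabs,
      abs_of_nonneg (show 0 ≤ B / (ε / 2) ^ 2 * |g x| by positivity)]
    calc _ ≤ B / (ε / 2) ^ 2 * |t₁ - t₂| * |g x| := mul_le_mul_of_nonneg_right h (abs_nonneg _)
      _ = _ := by ring
  refine (hasDerivAt_integral_of_dominated_loc_of_lip (ball_mem_nhds ε (half_pos hε))
    (Eventually.of_forall hmeas) ?_ ?_ (ae_of_all _ hlip) (hg.abs.const_mul _) ?_).2
  · refine hg.bdd_mul (c := 1) ((hs.div_const ε).min measurable_const).aestronglyMeasurable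
      (ae_of_all _ fun x => ?_)
    rw [norm_eq_abs, abs_of_nonneg (le_min (div_nonneg (hs0 x) hε.le) zero_le_one)]
    exact min_le_right _ _
  · exact ((Measurable.ite (measurableSet_lt hs measurable_const) (hs.div_const _).neg
      measurable_const).aestronglyMeasurable.mul hg.aestronglyMeasurable)
  · exact hne.mono fun x hx => (hasDerivAt_min_div_one hε hx).mul_const (g x)

section Annulus

variable {y₀ ψ₀ ε : ℝ}

lemma volume_setOf_sqrt_max_sub_sq_eq (hε : 0 < ε) :
    volume {x : ℝ | √(max (ψ₀ - (x - y₀) ^ 2) 0) = ε} = 0 := by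
  refine measure_mono_null (fun x (hx : √(max (ψ₀ - (x - y₀) ^ 2) 0) = ε) => ?_)
    (Measure.addHaar_sphere volume y₀ √(ψ₀ - ε ^ 2))
  have hsq := sq_sqrt (le_max_right (ψ₀ - (x - y₀) ^ 2) 0)
  rw [hx] at hsq
  have hP : ψ₀ - (x - y₀) ^ 2 = ε ^ 2 := by
    rcases le_total (ψ₀ - (x - y₀) ^ 2) 0 with h | h
    · rw [max_eq_right h] at hsq
      nlinarith
    · rw [max_eq_left h] at hsq
      exact hsq.symm
  rw [mem_sphere, dist_eq, ← sqrt_sq_eq_abs]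
  congr 1
  linarith

lemma abs_ite_mul_le_indicator {b ρmax : ℝ} (hb0 : 0 ≤ b) (hb : b ≤ ρmax) (hε : 0 < ε) (x : ℝ) :
    |(if √(max (ψ₀ - (x - y₀) ^ 2) 0) < ε then -(√(max (ψ₀ - (x - y₀) ^ 2) 0) / ε ^ 2)
      else 0) * b| ≤ (ball y₀ √ψ₀ \ ball y₀ √(ψ₀ - ε ^ 2)).indicator (fun _ => ρmax / ε) x := by
  have hind := indicator_nonneg (fun _ _ => div_nonneg (hb0.trans hb) hε.le)
    (s := ball y₀ √ψ₀ \ ball y₀ √(ψ₀ - ε ^ 2)) x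
  set s := √(max (ψ₀ - (x - y₀) ^ 2) 0) with hs_def
  by_cases hlt : s < ε
  swap
  · simpa [if_neg hlt] using hind
  rw [if_pos hlt]
  have hs0 : 0 ≤ s := sqrt_nonneg _
  rcases hs0.eq_or_lt with h0 | h0
  · simpa [← h0] using hind
  have hP : 0 < ψ₀ - (x - y₀) ^ 2 := by
    by_contra! h
    rw [hs_def, max_eq_right h, sqrt_zero] at h0
    exact h0.false
  have hs2 : s ^ 2 = ψ₀ - (x - y₀) ^ 2 := by
    rw [hs_def, sq_sqrt (le_max_right _ _), max_eq_left hP.le]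
  have hx : x ∈ ball y₀ √ψ₀ \ ball y₀ √(ψ₀ - ε ^ 2) := by
    rw [Set.mem_sdiff, mem_ball, mem_ball, dist_eq, lt_sqrt (abs_nonneg _), sq_abs, not_lt,
      ← sqrt_sq_eq_abs]
    exact ⟨by linarith, sqrt_le_sqrt (by nlinarith)⟩
  rw [indicator_of_mem hx, abs_mul, abs_neg, abs_of_nonneg (by positivity), abs_of_nonneg hb0]
  calc s / ε ^ 2 * b ≤ ε / ε ^ 2 * ρmax :=
        mul_le_mul (div_le_div_of_nonneg_right hlt.le (sq_nonneg ε)) hb hb0 (by positivity)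
    _ = ρmax / ε := by field_simp

end Annulus

lemma volume_real_ball_sdiff_ball {a r₁ r₂ : ℝ} (h₁ : 0 ≤ r₁) (h : r₁ ≤ r₂) :
    volume.real (ball a r₂ \ ball a r₁) = 2 * (r₂ - r₁) := by
  rw [measureReal_sdiff (ball_subset_ball h) measurableSet_ball, volume_real_ball (h₁.trans h),
    volume_real_ball h₁]
  ring

lemma sqrt_sub_sqrt_sub_le {a b : ℝ} (hb : 0 ≤ b) (hba : b < a) : √a - √(a - b) ≤ b / √a := by
  have ha : 0 < √a := sqrt_pos.2 (hb.trans_lt hba)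
  have h₁ := sq_sqrt (sub_nonneg.2 hba.le)
  have h₂ := sq_sqrt (hb.trans hba.le)
  have h₃ : √(a - b) ≤ √a := sqrt_le_sqrt (sub_le_self a hb)
  rw [le_div_iff₀ ha]
  nlinarith [mul_nonneg (sub_nonneg.2 h₃) (sqrt_nonneg (a - b))]

lemma hasDerivAt_Greg {N : ℕ} {f : ℝ → ℝ} {ρmax ε : ℝ} (hfi : Integrable f)
    (hf0 : ∀ x, 0 ≤ f x) (hf_le : ∀ x, f x ≤ ρmax) (y ψ : Fin N → ℝ) (i : Fin N) (hε : 0 < ε)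
    (hεψ : ε < √(ψ i)) :
    ∃ d, HasDerivAt (fun t => Greg y f t ψ i) d ε ∧ |d| ≤ 2 * ρmax * ε / √(ψ i) := by
  have hε2 : ε ^ 2 < ψ i := (lt_sqrt hε.le).1 hεψ
  have hρ : 0 ≤ ρmax := (hf0 0).trans (hf_le 0)
  set A := ball (y i) √(ψ i) \ ball (y i) √(ψ i - ε ^ 2)
  have hA : Integrable (A.indicator fun _ => ρmax / ε) :=
    (integrable_indicator_iff (measurableSet_ball.diff measurableSet_ball)).2
      (integrableOn_const ((measure_mono sdiff_subset).trans_lt measure_ball_lt_top).ne)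
  refine ⟨_, hasDerivAt_integral_min_div_mul (μ := volume.restrict (Lag1 y ψ i)) (B := √(ψ i))
    (by fun_prop) (fun _ => sqrt_nonneg _)
    (fun x => sqrt_le_sqrt (max_le (by nlinarith [sq_nonneg (x - y i)])
      (by linarith [sq_nonneg ε])))
    hfi.restrict hε (ae_restrict_of_ae (measure_eq_zero_iff_ae_notMem.1
      (volume_setOf_sqrt_max_sub_sq_eq hε))), ?_⟩
  calc _ ≤ ∫ x in Lag1 y ψ i, A.indicator (fun _ => ρmax / ε) x := by
        rw [← norm_eq_abs]
        exact norm_integral_le_of_norm_le hA.restrict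
          (ae_of_all _ fun x => abs_ite_mul_le_indicator (hf0 x) (hf_le x) hε x)
    _ ≤ ∫ x, A.indicator (fun _ => ρmax / ε) x :=
        setIntegral_le_integral hA
          (ae_of_all _ (indicator_nonneg fun _ _ => div_nonneg hρ hε.le))
    _ = ρmax / ε * (2 * (√(ψ i) - √(ψ i - ε ^ 2))) := by
        rw [integral_indicator_const _ (measurableSet_ball.diff measurableSet_ball),
          volume_real_ball_sdiff_ball (sqrt_nonneg _) (sqrt_le_sqrt (by linarith [sq_nonneg ε])),
          smul_eq_mul, mul_comm]
    _ ≤ ρmax / ε * (2 * (ε ^ 2 / √(ψ i))) := by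
        gcongr
        exact sqrt_sub_sqrt_sub_le (sq_nonneg ε) hε2
    _ = 2 * ρmax * ε / √(ψ i) := by field_simp

lemma sqrt_sum_sq_le_mul_sqrt_card {ι : Type*} [Fintype ι] {q : ι → ℝ} {M : ℝ} (hM : 0 ≤ M)
    (h : ∀ i, |q i| ≤ M) : √(∑ i, q i ^ 2) ≤ M * √(Fintype.card ι) := by
  rw [← sqrt_sq hM, ← sqrt_mul (sq_nonneg M)]
  refine sqrt_le_sqrt ?_
  calc ∑ i, q i ^ 2 ≤ ∑ _i : ι, M ^ 2 :=
        Finset.sum_le_sum fun i _ => sq_le_sq' (abs_le.1 (h i)).1 (abs_le.1 (h i)).2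
    _ = M ^ 2 * Fintype.card ι := by simp [mul_comm]

theorem stmt13_general {N : ℕ} (c e ρmin ρmax : ℝ)
    (f : ℝ → ℝ) (hfm : Measurable f) (hf0 : ∀ x, 0 ≤ f x)
    (hsupp : ∀ x, x ∉ Set.Icc c e → f x = 0)
    (hbd : ∀ x ∈ Set.Icc c e, ρmin ≤ f x ∧ f x ≤ ρmax)
    (y : Fin N → ℝ)
    (α : Fin N → ℝ) (hα : ∀ i, 0 < α i)
    (ε : ℝ) (hε : 0 < ε) (hε0 : ε < min 1 ((⨅ j, α j) / (2 * ρmax)))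
    (ψ : Fin N → ℝ) (hm : IsMaxOn (Kreg y α f ε) Set.univ ψ) :
    ∃ q : Fin N → ℝ,
      (∀ i, HasDerivAt (fun ε' : ℝ => Greg y f ε' ψ i) (-(q i)) ε) ∧
      Real.sqrt (∑ i, (q i) ^ 2) ≤
        4 * ρmax ^ 2 / (⨅ j, α j) * Real.sqrt (N : ℝ) * ε := by
  set αm := ⨅ j, α j
  have hεα : ε < αm / (2 * ρmax) := (lt_min_iff.1 hε0).2
  obtain ⟨hαm, hρ⟩ : 0 < αm ∧ 0 < ρmax := by
    rcases div_pos_iff.1 (hε.trans hεα) with h | h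
    · exact ⟨h.1, by linarith [h.2]⟩
    · exact absurd h.1 (not_lt.2 (Real.iInf_nonneg fun j => (hα j).le))
  have hf_le : ∀ x, f x ≤ ρmax := fun x => by
    by_cases hx : x ∈ Icc c e
    exacts [(hbd x hx).2, (hsupp x hx).trans_le hρ.le]
  have hfK : IntegrableOn f (Icc c e) :=
    Measure.integrableOn_of_bounded measure_Icc_lt_top.ne hfm.aestronglyMeasurable
      (ae_of_all _ fun x => (norm_of_nonneg (hf0 x)).trans_le (hf_le x))
  have hd : ∀ i, ∃ d, HasDerivAt (fun t => Greg y f t ψ i) d ε ∧ |d| ≤ 4 * ρmax ^ 2 / αm * ε := by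
    intro i
    have hψ : αm / (2 * ρmax) ≤ √(ψ i) :=
      (div_le_div_of_nonneg_right (ciInf_le (Finite.bddBelow_range α) i) (by positivity)).trans
        (div_le_sqrt_of_isMaxOn_Kreg isCompact_Icc hfK hsupp hf0 hf_le hε.ne' hm i)
    obtain ⟨d, hd, hdle⟩ := hasDerivAt_Greg (hfK.integrable_of_forall_notMem_eq_zero hsupp)
      hf0 hf_le y ψ i hε (hεα.trans_le hψ)
    refine ⟨d, hd, hdle.trans ?_⟩
    calc 2 * ρmax * ε / √(ψ i) ≤ 2 * ρmax * ε / (αm / (2 * ρmax)) :=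
          div_le_div_of_nonneg_left (by positivity) (hε.trans hεα) hψ
      _ = 4 * ρmax ^ 2 / αm * ε := by field_simp; ring
  choose d hd hdle using hd
  refine ⟨fun i => -d i, fun i => by simpa using hd i, ?_⟩
  calc √(∑ i, (-d i) ^ 2) ≤ 4 * ρmax ^ 2 / αm * ε * √(Fintype.card (Fin N)) :=
        sqrt_sum_sq_le_mul_sqrt_card (by positivity) fun i => by simpa using hdle i
    _ = 4 * ρmax ^ 2 / αm * √N * ε := by rw [Fintype.card_fin]; ring

/-- for `0 < ε < ε₀ = min(1, α_min/(2ρ_max))` and `ψ` a maximizer of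
`K^ε`, the map `e ↦ G^e_i(ψ)` is differentiable at `e = ε` for each `i`, and the vector
`q` with `q_i = −(d/de) G^e_i(ψ)|_{e=ε}` satisfies `‖q‖ ≤ (4ρ_max²/α_min) √N ε`. -/
theorem stmt13 {N : ℕ} (hN : 0 < N) (c e ρmin ρmax : ℝ) (hce : c < e)
    (f : ℝ → ℝ) (hfm : Measurable f) (hf0 : ∀ x, 0 ≤ f x)
    (hsupp : ∀ x, x ∉ Set.Icc c e → f x = 0)
    (hcont : ContinuousOn f (Set.Icc c e))
    (hρmin : 0 < ρmin) (hρ : ρmin ≤ ρmax)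
    (hbd : ∀ x ∈ Set.Icc c e, ρmin ≤ f x ∧ f x ≤ ρmax)
    (hint : ∫ x, f x = 1)
    (y : Fin N → ℝ) (hy : StrictMono y)
    (α : Fin N → ℝ) (hα : ∀ i, 0 < α i) (hαs : ∑ i, α i < 1)
    (ε : ℝ) (hε : 0 < ε) (hε0 : ε < min 1 ((⨅ j, α j) / (2 * ρmax)))
    (ψ : Fin N → ℝ) (hm : IsMaxOn (Kreg y α f ε) Set.univ ψ) :
    ∃ q : Fin N → ℝ,
      (∀ i, HasDerivAt (fun ε' : ℝ => Greg y f ε' ψ i) (-(q i)) ε) ∧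
      Real.sqrt (∑ i, (q i) ^ 2) ≤
        4 * ρmax ^ 2 / (⨅ j, α j) * Real.sqrt (N : ℝ) * ε :=
  stmt13_general c e ρmin ρmax f hfm hf0 hsupp hbd y α hα ε hε hε0 ψ hm
end
end

section
/- Let M be a real symmetric (N+1)×(N+1) matrix (rows and columns indexed by 0,…,N) with M𝟙 = 0, and suppose that vᵀ M v ≥ λ ‖v‖² for some λ ≥ 0 and all v ∈ ℝ^{N+1} orthogonal to the all-ones vector 𝟙. Let M̃ be the N×N submatrix obtained by deleting the row and column of index 0. Then uᵀ M̃ u ≥ (λ/(N+1)) ‖u‖² for every u ∈ ℝ^N; in particular the smallest eigenvalue of M̃ is at least λ₁(M)/(N+1). -/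
open MeasureTheory Real Filter Set

noncomputable section

/-!
Extend `u` by a zero in coordinate `0` and subtract the mean, obtaining `v ⟂ 𝟙`.
Since `M𝟙 = 0` and `𝟙ᵀM = 0`, the shift does not change the quadratic form, so
`vᵀMv = uᵀM̃u`. Since one coordinate of the extension vanishes, Cauchy–Schwarz on the other `N`
coordinates gives `‖v‖² = ‖u‖² - (∑ u)²/(N+1) ≥ ‖u‖²/(N+1)`. The eigenvalue bound is the case
`λ = λ₁(M)`, which is admissible by homogeneity of the quadratic form.
-/

/-- The second smallest eigenvalue of a Laplacian matrix, i.e. the infimum of the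
quadratic form `vᵀ A v` over unit vectors `v` orthogonal to the all-ones vector. -/
def lam1 {n : ℕ} (A : Matrix (Fin n) (Fin n) ℝ) : ℝ :=
  sInf {r : ℝ | ∃ v : Fin n → ℝ, (∑ i, (v i) ^ 2) = 1 ∧ (∑ i, v i) = 0 ∧
    r = ∑ i, ∑ j, v i * A i j * v j}

/-- The smallest eigenvalue of a symmetric matrix, i.e. the infimum of the quadratic
form over unit vectors. -/
def lamMin {n : ℕ} (A : Matrix (Fin n) (Fin n) ℝ) : ℝ :=
  sInf {r : ℝ | ∃ u : Fin n → ℝ, (∑ i, (u i) ^ 2) = 1 ∧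
    r = ∑ i, ∑ j, u i * A i j * u j}

section Centering

variable {ι : Type*} [Fintype ι]

theorem sum_sub_mean_eq_zero [Nonempty ι] (w : ι → ℝ) :
    ∑ i, (w i - (∑ j, w j) / Fintype.card ι) = 0 := by
  have : (Fintype.card ι : ℝ) ≠ 0 := by positivity
  rw [Finset.sum_sub_distrib, Finset.sum_const, Finset.card_univ, nsmul_eq_mul,
    mul_div_cancel₀ _ this, sub_self]

theorem sum_sq_sub_mean [Nonempty ι] (w : ι → ℝ) :
    ∑ i, (w i - (∑ j, w j) / Fintype.card ι) ^ 2 =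
      ∑ i, w i ^ 2 - (∑ i, w i) ^ 2 / Fintype.card ι := by
  have : (Fintype.card ι : ℝ) ≠ 0 := by positivity
  simp only [sub_sq, Finset.sum_add_distrib, Finset.sum_sub_distrib, ← Finset.sum_mul,
    ← Finset.mul_sum, Finset.sum_const, Finset.card_univ, nsmul_eq_mul]
  field_simp
  ring

theorem sum_sq_le_card_mul_sum_sq_sub_mean (w : ι → ℝ) (i₀ : ι) (hw : w i₀ = 0) :
    ∑ i, w i ^ 2 ≤ Fintype.card ι * ∑ i, (w i - (∑ j, w j) / Fintype.card ι) ^ 2 := by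
  classical
  have : Nonempty ι := ⟨i₀⟩
  have hcard : (0 : ℝ) < Fintype.card ι := by positivity
  have hcs : (∑ i, w i) ^ 2 ≤ (Fintype.card ι - 1) * ∑ i, w i ^ 2 := by
    have h := sq_sum_le_card_mul_sum_sq (s := Finset.univ.erase i₀) (f := w)
    rwa [Finset.sum_erase _ hw, Finset.sum_erase _ (by simp [hw]),
      Finset.card_erase_of_mem (Finset.mem_univ _), Finset.card_univ,
      Nat.cast_sub Fintype.card_pos, Nat.cast_one] at h
  rw [sum_sq_sub_mean, mul_sub, mul_div_cancel₀ _ hcard.ne']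
  linarith

theorem sum_sub_const_mul_mul_sub_const {A : Matrix ι ι ℝ} (hrow : ∀ i, ∑ j, A i j = 0)
    (hcol : ∀ j, ∑ i, A i j = 0) (w : ι → ℝ) (c : ℝ) :
    ∑ i, ∑ j, (w i - c) * A i j * (w j - c) = ∑ i, ∑ j, w i * A i j * w j := by
  have expand : ∀ i j, (w i - c) * A i j * (w j - c) =
      w i * A i j * w j - c * (A i j * w j) - (w i - c) * c * A i j := fun i j => by ring
  simp only [expand, Finset.sum_sub_distrib, ← Finset.mul_sum, hrow, mul_zero, sub_zero]
  rw [Finset.sum_comm (f := fun i j => A i j * w j)]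
  simp only [← Finset.sum_mul, hcol, zero_mul, Finset.sum_const_zero, mul_zero, sub_zero]

end Centering

theorem sum_cons_zero_mul_mul_cons_zero {N : ℕ} (M : Matrix (Fin (N + 1)) (Fin (N + 1)) ℝ)
    (u : Fin N → ℝ) :
    ∑ i, ∑ j, (Fin.cons 0 u : Fin (N + 1) → ℝ) i * M i j * (Fin.cons 0 u : Fin (N + 1) → ℝ) j =
      ∑ i, ∑ j, u i * M i.succ j.succ * u j := by
  simp [Fin.sum_univ_succ]

theorem lam1_fin_one (A : Matrix (Fin 1) (Fin 1) ℝ) : lam1 A = 0 := by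
  unfold lam1
  convert Real.sInf_empty
  refine Set.eq_empty_of_forall_notMem ?_
  rintro r ⟨v, h1, h2, -⟩
  simp_all

theorem lamMin_fin_zero (A : Matrix (Fin 0) (Fin 0) ℝ) : lamMin A = 0 := by
  simp [lamMin]

theorem le_lam1 {n : ℕ} {A : Matrix (Fin (n + 2)) (Fin (n + 2)) ℝ} {lam : ℝ}
    (hbound : ∀ v : Fin (n + 2) → ℝ, ∑ i, v i = 0 →
      lam * ∑ i, v i ^ 2 ≤ ∑ i, ∑ j, v i * A i j * v j) :
    lam ≤ lam1 A := by
  set a := √(1 / 2)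
  refine le_csInf ⟨_, Fin.cons a (Fin.cons (-a) 0), ?_, ?_, rfl⟩ ?_
  · simp [Fin.sum_univ_succ, a]
    norm_num
  · simp [Fin.sum_univ_succ]
  · rintro _ ⟨v, h1, h2, rfl⟩
    simpa [h1] using hbound v h2

theorem le_lamMin {n : ℕ} {A : Matrix (Fin (n + 1)) (Fin (n + 1)) ℝ} {c : ℝ}
    (h : ∀ u : Fin (n + 1) → ℝ, c * ∑ i, u i ^ 2 ≤ ∑ i, ∑ j, u i * A i j * u j) :
    c ≤ lamMin A := by
  refine le_csInf ⟨_, Fin.cons 1 0, by simp [Fin.sum_univ_succ], rfl⟩ ?_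
  rintro _ ⟨u, h1, rfl⟩
  simpa [h1] using h u

theorem lam1_mul_sum_sq_le {n : ℕ} {A : Matrix (Fin n) (Fin n) ℝ} {lam : ℝ}
    (hbound : ∀ v : Fin n → ℝ, ∑ i, v i = 0 →
      lam * ∑ i, v i ^ 2 ≤ ∑ i, ∑ j, v i * A i j * v j)
    (v : Fin n → ℝ) (hv : ∑ i, v i = 0) :
    lam1 A * ∑ i, v i ^ 2 ≤ ∑ i, ∑ j, v i * A i j * v j := by
  rcases (Finset.sum_nonneg fun i _ => sq_nonneg (v i)).eq_or_lt with h0 | hpos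
  · have hv0 : ∀ i, v i = 0 := fun i => by
      have := (Finset.sum_eq_zero_iff_of_nonneg fun i _ => sq_nonneg (v i)).1 h0.symm
      simpa using this i (Finset.mem_univ i)
    simp [hv0]
  set t := √(∑ i, v i ^ 2)
  have ht : t ^ 2 = ∑ i, v i ^ 2 := Real.sq_sqrt hpos.le
  have htpos : 0 < t := Real.sqrt_pos.2 hpos
  have hunit : ∑ i, (v i / t) ^ 2 = 1 := by
    simp only [div_pow, ← Finset.sum_div, ← ht, div_self (pow_pos htpos 2).ne']
  have hcentred : ∑ i, v i / t = 0 := by rw [← Finset.sum_div, hv, zero_div]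
  have hscale : ∑ i, ∑ j, v i / t * A i j * (v j / t) =
      (∑ i, ∑ j, v i * A i j * v j) / t ^ 2 := by
    simp only [Finset.sum_div]
    congr! 2 with i _ j _
    field_simp
  have hle : lam1 A ≤ (∑ i, ∑ j, v i * A i j * v j) / t ^ 2 :=
    hscale ▸ csInf_le ⟨lam, by rintro _ ⟨w, h1, h2, rfl⟩; simpa [h1] using hbound w h2⟩
      ⟨_, hunit, hcentred, rfl⟩
  rwa [← ht, ← le_div_iff₀ (pow_pos htpos 2)]

theorem div_mul_sum_sq_le_submatrix_succ {N : ℕ} {M : Matrix (Fin (N + 1)) (Fin (N + 1)) ℝ}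
    (hrow : ∀ i, ∑ j, M i j = 0) (hcol : ∀ j, ∑ i, M i j = 0) {lam : ℝ} (hlam : 0 ≤ lam)
    (hbound : ∀ v : Fin (N + 1) → ℝ, ∑ i, v i = 0 →
      lam * ∑ i, v i ^ 2 ≤ ∑ i, ∑ j, v i * M i j * v j)
    (u : Fin N → ℝ) :
    lam / ((N : ℝ) + 1) * ∑ i, u i ^ 2 ≤ ∑ i, ∑ j, u i * M i.succ j.succ * u j := by
  set w : Fin (N + 1) → ℝ := Fin.cons 0 u
  set c := (∑ j, w j) / Fintype.card (Fin (N + 1))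
  have hcard : (Fintype.card (Fin (N + 1)) : ℝ) = N + 1 := by simp
  have hw : ∑ i, w i ^ 2 = ∑ i, u i ^ 2 := by simp [w, Fin.sum_univ_succ]
  have hnorm : ∑ i, u i ^ 2 ≤ (N + 1) * ∑ i, (w i - c) ^ 2 := by
    simpa only [hw, hcard, c] using sum_sq_le_card_mul_sum_sq_sub_mean w 0 rfl
  calc lam / ((N : ℝ) + 1) * ∑ i, u i ^ 2
      ≤ lam / ((N : ℝ) + 1) * ((N + 1) * ∑ i, (w i - c) ^ 2) := by gcongr
    _ = lam * ∑ i, (w i - c) ^ 2 := by field_simp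
    _ ≤ ∑ i, ∑ j, (w i - c) * M i j * (w j - c) := hbound _ (sum_sub_mean_eq_zero w)
    _ = ∑ i, ∑ j, w i * M i j * w j := sum_sub_const_mul_mul_sub_const hrow hcol w c
    _ = ∑ i, ∑ j, u i * M i.succ j.succ * u j := sum_cons_zero_mul_mul_cons_zero M u

/-- if `M` is symmetric with `M𝟙 = 0` and `vᵀMv ≥ λ‖v‖²` for all
`v ⟂ 𝟙`, then the submatrix `M̃` obtained by deleting row and column `0` satisfies
`uᵀ M̃ u ≥ (λ/(N+1))‖u‖²` for every `u`; in particular its smallest eigenvalue is at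
least `λ₁(M)/(N+1)`. -/
theorem stmt18 {N : ℕ} (M : Matrix (Fin (N + 1)) (Fin (N + 1)) ℝ) (hMs : M.IsSymm)
    (hM1 : ∀ i, ∑ j, M i j = 0) (lam : ℝ) (hlam : 0 ≤ lam)
    (hbound : ∀ v : Fin (N + 1) → ℝ, (∑ i, v i) = 0 →
      lam * (∑ i, (v i) ^ 2) ≤ ∑ i, ∑ j, v i * M i j * v j) :
    (∀ u : Fin N → ℝ,
      (lam / ((N : ℝ) + 1)) * (∑ i, (u i) ^ 2) ≤
        ∑ i, ∑ j, u i * M i.succ j.succ * u j) ∧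
    lam1 M / ((N : ℝ) + 1) ≤ lamMin (M.submatrix Fin.succ Fin.succ) := by
  have hcol : ∀ j, ∑ i, M i j = 0 := fun j => by simpa only [hMs.apply] using hM1 j
  refine ⟨div_mul_sum_sq_le_submatrix_succ hM1 hcol hlam hbound, ?_⟩
  rcases N with _ | n
  -- both infima are taken over empty sets, hence `0` by convention
  · simp [lam1_fin_one, lamMin_fin_zero]
  · have hlam1 : 0 ≤ lam1 M := hlam.trans (le_lam1 hbound)
    exact le_lamMin (div_mul_sum_sq_le_submatrix_succ hM1 hcol hlam1 (lam1_mul_sum_sq_le hbound))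
end
end
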